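/- arXiv:1309.0345 — 9 statements merged into one kernel-verified Lean document; each statement's English description precedes it below -/
import Mathlib

section
/- For every ε>0 and every function F: ℕ→ℕ there exist K∈ℕ and natural numbers M_1,…,M_K ≥ 1 such that the following holds: for every Borel measure μ on the unit circle 𝕋 = {z∈ℂ : |z|=1} and every f∈L²(𝕋,μ) with ‖f‖_{L²(μ)} ≤ 1 there exists i∈{1,…,K} such that for all N, N' with M_i ≤ N, N' ≤ F(M_i) one has ‖(1/N)Σ_{n=1}^{N} Uⁿf − (1/N')Σ_{n=1}^{N'} Uⁿf‖_{L²(μ)} < ε, where U is the multiplication operator on L²(𝕋,μ) given by (Uf)(λ) = λ·f(λ), so that (Uⁿf)(λ) = λⁿ·f(λ). -/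
/-!
The multiplier of `N⁻¹ ∑ Uⁿ - N'⁻¹ ∑ Uⁿ` at `z` is `cesaro N z - cesaro N' z`. For
`M ≤ N, N' ≤ L` it is at most `ε / 2` unless `‖z - 1‖` lies in the annulus
`(ε / (4 (L + 1)), 8 / (ε M))`: close to `1` because `‖cesaro N z - 1‖ ≤ N ‖z - 1‖`, far from `1`
because `‖cesaro N z‖ ≤ 2 / (N ‖z - 1‖)`. Taking each scale `M_{k+1}` large compared with
`F (M_k)` makes these annuli pairwise disjoint, so among `K ≥ 8 / ε²` of them one carries at most
`ε² / 8` of the mass of `|f|²`. There the multiplier is still bounded by `2`, whence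
`‖…‖² ≤ ε² / 4 + 4 ε² / 8 < ε²`.
-/

open MeasureTheory Finset Function
open scoped ENNReal

noncomputable def cesaro (N : ℕ) (z : ℂ) : ℂ := (N : ℂ)⁻¹ * ∑ n ∈ Icc 1 N, z ^ n

lemma natCast_mul_cesaro (N : ℕ) (z : ℂ) : N * cesaro N z = ∑ n ∈ Icc 1 N, z ^ n := by
  rcases N.eq_zero_or_pos with rfl | hN
  · simp
  · rw [cesaro, ← mul_assoc, mul_inv_cancel₀ (by exact_mod_cast hN.ne'), one_mul]

lemma sum_Icc_pow_mul_sub_one (N : ℕ) (z : ℂ) :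
    (∑ n ∈ Icc 1 N, z ^ n) * (z - 1) = z ^ (N + 1) - z := by
  induction N with
  | zero => simp
  | succ N ih => rw [sum_Icc_succ_top (by omega), add_mul, ih]; ring

section UnitDisc

variable {z : ℂ} (hz : ‖z‖ ≤ 1)
include hz

lemma norm_cesaro_le_one (N : ℕ) : ‖cesaro N z‖ ≤ 1 := by
  have hsum : ‖∑ n ∈ Icc 1 N, z ^ n‖ ≤ N :=
    (norm_sum_le _ _).trans <| (sum_le_card_nsmul _ _ 1 fun n _ => by
      rw [norm_pow]; exact pow_le_one₀ (norm_nonneg z) hz).trans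
      (by simp)
  rw [cesaro, norm_mul, norm_inv, Complex.norm_natCast]
  exact inv_mul_le_one_of_le₀ hsum (Nat.cast_nonneg N)

lemma norm_pow_sub_one_le (n : ℕ) : ‖z ^ n - 1‖ ≤ n * ‖z - 1‖ := by
  induction n with
  | zero => simp
  | succ n ih =>
    calc ‖z ^ (n + 1) - 1‖ = ‖z ^ n * (z - 1) + (z ^ n - 1)‖ := by ring_nf
      _ ≤ ‖z - 1‖ + n * ‖z - 1‖ := by
        grw [norm_add_le, norm_mul, norm_pow, pow_le_one₀ (norm_nonneg z) hz, one_mul, ih]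
      _ = (n + 1 : ℕ) * ‖z - 1‖ := by push_cast; ring

lemma norm_cesaro_sub_one_le {N : ℕ} (hN : 1 ≤ N) : ‖cesaro N z - 1‖ ≤ N * ‖z - 1‖ := by
  have hN0 : (N : ℂ) ≠ 0 := by exact_mod_cast (by omega : N ≠ 0)
  have hsub : cesaro N z - 1 = (N : ℂ)⁻¹ * ∑ n ∈ Icc 1 N, (z ^ n - 1) := by
    rw [sum_sub_distrib, sum_const, Nat.card_Icc, cesaro]
    field_simp
    simp
  have hsum : ‖∑ n ∈ Icc 1 N, (z ^ n - 1)‖ ≤ N * (N * ‖z - 1‖) := by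
    refine (norm_sum_le _ _).trans ?_
    refine (sum_le_card_nsmul _ _ (N * ‖z - 1‖) fun n hn => ?_).trans (by simp)
    exact (norm_pow_sub_one_le hz n).trans (by gcongr; exact_mod_cast (mem_Icc.mp hn).2)
  rw [hsub, norm_mul, norm_inv, Complex.norm_natCast, inv_mul_le_iff₀ (by exact_mod_cast hN)]
  exact hsum

lemma natCast_mul_norm_sub_one_mul_norm_cesaro_le (N : ℕ) :
    N * ‖z - 1‖ * ‖cesaro N z‖ ≤ 2 := by
  have h : (N * cesaro N z) * (z - 1) = z * (z ^ N - 1) := by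
    rw [natCast_mul_cesaro, sum_Icc_pow_mul_sub_one]; ring
  calc N * ‖z - 1‖ * ‖cesaro N z‖ = ‖z * (z ^ N - 1)‖ := by
        rw [← h, norm_mul, norm_mul, Complex.norm_natCast]; ring
    _ ≤ 1 * (1 + 1) := by grw [norm_mul, hz, norm_sub_le, norm_pow, pow_le_one₀ (norm_nonneg z) hz, norm_one]
    _ = 2 := by norm_num

lemma norm_cesaro_le_of_le_mul {N : ℕ} {c : ℝ} (hc : 0 < c) (h : c ≤ N * ‖z - 1‖) :
    ‖cesaro N z‖ ≤ 2 / c := by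
  rw [le_div_iff₀ hc]
  nlinarith [natCast_mul_norm_sub_one_mul_norm_cesaro_le hz N, norm_nonneg (cesaro N z)]

end UnitDisc

def badAnnulus (ε : ℝ) (M L : ℕ) : Set ℂ :=
  {z | ε / (4 * (L + 1)) < ‖z - 1‖ ∧ ‖z - 1‖ < 8 / (ε * M)}

lemma isOpen_badAnnulus (ε : ℝ) (M L : ℕ) : IsOpen (badAnnulus ε M L) :=
  isOpen_Ioo.preimage (f := fun z : ℂ => ‖z - 1‖) (by fun_prop)

lemma norm_cesaro_sub_cesaro_le {ε : ℝ} (hε : 0 < ε) {z : ℂ} (hz : ‖z‖ ≤ 1) {M L N N' : ℕ}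
    (hM : 1 ≤ M) (hN : M ≤ N) (hNL : N ≤ L) (hN' : M ≤ N') (hN'L : N' ≤ L)
    (hzB : z ∉ badAnnulus ε M L) : ‖cesaro N z - cesaro N' z‖ ≤ ε / 2 := by
  simp only [badAnnulus, Set.mem_ofPred_eq, not_and_or, not_lt] at hzB
  rcases hzB with hnear | hfar
  · have hL : (N + N' : ℝ) ≤ 2 * (L + 1) := by
      have : (N : ℝ) ≤ L := by exact_mod_cast hNL
      have : (N' : ℝ) ≤ L := by exact_mod_cast hN'L
      linarith
    calc ‖cesaro N z - cesaro N' z‖ = ‖(cesaro N z - 1) - (cesaro N' z - 1)‖ := by ring_nf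
      _ ≤ (N + N' : ℝ) * ‖z - 1‖ := by
        grw [norm_sub_le, norm_cesaro_sub_one_le hz (hM.trans hN),
          norm_cesaro_sub_one_le hz (hM.trans hN'), add_mul]
      _ ≤ 2 * (L + 1) * (ε / (4 * (L + 1))) := by gcongr
      _ = ε / 2 := by field_simp; ring
  · have hM0 : (0 : ℝ) < M := by exact_mod_cast hM
    have hc : 8 / ε ≤ M * ‖z - 1‖ := by
      rw [div_le_iff₀ (by positivity)] at hfar
      rw [div_le_iff₀ hε]
      linarith
    have hsmall : ∀ K : ℕ, M ≤ K → ‖cesaro K z‖ ≤ ε / 4 := fun K hK => by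
      refine (norm_cesaro_le_of_le_mul hz (by positivity)
        (hc.trans (by gcongr))).trans_eq ?_
      field_simp; norm_num
    calc ‖cesaro N z - cesaro N' z‖ ≤ ε / 4 + ε / 4 := by
          grw [norm_sub_le, hsmall N hN, hsmall N' hN']
      _ = ε / 2 := by ring

lemma disjoint_badAnnulus {ε : ℝ} (hε : 0 < ε) {M L M' L' : ℕ} (hM' : 0 < M')
    (h : 32 * (L + 1) / ε ^ 2 ≤ M') : Disjoint (badAnnulus ε M L) (badAnnulus ε M' L') := by
  refine Set.disjoint_left.mpr fun z hz hz' => (hz.1.trans hz'.2).not_ge ?_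
  have hM'0 : (0 : ℝ) < M' := by exact_mod_cast hM'
  rw [div_le_iff₀ (by positivity)] at h
  rw [div_le_div_iff₀ (by positivity) (by positivity)]
  nlinarith

noncomputable def scale (ε : ℝ) (F : ℕ → ℕ) : ℕ → ℕ
  | 0 => 1
  | k + 1 => scale ε F k + ⌈32 * (F (scale ε F k) + 1) / ε ^ 2⌉₊

lemma one_le_scale (ε : ℝ) (F : ℕ → ℕ) : ∀ k, 1 ≤ scale ε F k
  | 0 => le_rfl
  | k + 1 => (one_le_scale ε F k).trans (Nat.le_add_right _ _)

lemma monotone_scale (ε : ℝ) (F : ℕ → ℕ) : Monotone (scale ε F) :=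
  monotone_nat_of_le_succ fun _ => Nat.le_add_right _ _

lemma le_scale_of_lt (ε : ℝ) (F : ℕ → ℕ) {i j : ℕ} (hij : i < j) :
    32 * (F (scale ε F i) + 1) / ε ^ 2 ≤ scale ε F j := by
  have hstep : 32 * (F (scale ε F i) + 1) / ε ^ 2 ≤ (scale ε F (i + 1) : ℝ) := by
    rw [scale, Nat.cast_add]
    exact (Nat.le_ceil _).trans (le_add_of_nonneg_left (Nat.cast_nonneg _))
  exact hstep.trans (by exact_mod_cast monotone_scale ε F hij)

lemma pairwise_disjoint_badAnnulus_scale {ε : ℝ} (hε : 0 < ε) (F : ℕ → ℕ) :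
    Pairwise (Disjoint on fun k => badAnnulus ε (scale ε F k) (F (scale ε F k))) :=
  (pairwise_disjoint_on _).mpr fun _ _ hij =>
    disjoint_badAnnulus hε (one_le_scale ε F _) (le_scale_of_lt ε F hij)

lemma one_le_natCast_ceil_inv_mul_ofReal {c : ℝ} (hc : 0 < c) :
    1 ≤ (⌈c⁻¹⌉₊ : ℝ≥0∞) * ENNReal.ofReal c := by
  rw [← ENNReal.ofReal_natCast, ← ENNReal.ofReal_mul (Nat.cast_nonneg _), ← ENNReal.ofReal_one]
  gcongr
  exact (inv_le_iff_one_le_mul₀ hc).mp (Nat.le_ceil _)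

section Lebesgue

variable {α : Type*} [MeasurableSpace α] {μ : Measure α}

lemma eLpNorm_two_sq {E : Type*} [NormedAddCommGroup E] (f : α → E) :
    eLpNorm f 2 μ ^ 2 = ∫⁻ x, ‖f x‖ₑ ^ 2 ∂μ := by
  simpa using eLpNorm_nnreal_pow_eq_lintegral (f := f) (μ := μ) (p := 2) two_ne_zero

lemma exists_setLIntegral_le_of_lintegral_le_card_mul {ι : Type*} [Fintype ι] [Nonempty ι]
    {s : ι → Set α} (hs : ∀ i, MeasurableSet (s i)) (hd : Pairwise (Disjoint on s))
    {g : α → ℝ≥0∞} {c : ℝ≥0∞} (hg : ∫⁻ x, g x ∂μ ≤ Fintype.card ι * c) :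
    ∃ i, ∫⁻ x in s i, g x ∂μ ≤ c := by
  obtain ⟨i, -, hi⟩ := ENNReal.exists_le_of_sum_le (s := univ)
    (f := fun i => ∫⁻ x in s i, g x ∂μ) (g := fun _ => c) univ_nonempty <| calc
      ∑ i, ∫⁻ x in s i, g x ∂μ = ∫⁻ x in ⋃ i, s i, g x ∂μ := by
        rw [lintegral_iUnion hs hd, tsum_fintype]
      _ ≤ ∫⁻ x, g x ∂μ := setLIntegral_le_lintegral _ _
      _ ≤ ∑ _ : ι, c := by simpa using hg
  exact ⟨i, hi⟩

variable {𝕜 : Type*} [NormedRing 𝕜] [NormMulClass 𝕜] {m f : α → 𝕜} {s : Set α}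

lemma lintegral_enorm_mul_sq_le {a b : ℝ} (hf : AEStronglyMeasurable f μ)
    (hs : MeasurableSet s) (ha : ∀ x ∉ s, ‖m x‖ ≤ a) (hb : ∀ x ∈ s, ‖m x‖ ≤ b) :
    ∫⁻ x, ‖m x * f x‖ₑ ^ 2 ∂μ ≤ ENNReal.ofReal a ^ 2 * ∫⁻ x, ‖f x‖ₑ ^ 2 ∂μ
      + ENNReal.ofReal b ^ 2 * ∫⁻ x in s, ‖f x‖ₑ ^ 2 ∂μ := by
  have hpt : ∀ x, ‖m x * f x‖ₑ ^ 2 ≤ ENNReal.ofReal a ^ 2 * ‖f x‖ₑ ^ 2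
      + s.indicator (fun x => ENNReal.ofReal b ^ 2 * ‖f x‖ₑ ^ 2) x := by
    intro x
    rw [enorm_mul, mul_pow, ← ofReal_norm]
    by_cases hx : x ∈ s
    · rw [Set.indicator_of_mem hx]
      grw [hb x hx]
      exact le_add_self
    · rw [Set.indicator_of_notMem hx, add_zero]
      grw [ha x hx]
  refine (lintegral_mono hpt).trans_eq ?_
  rw [lintegral_add_left' ((hf.enorm.pow_const 2).const_mul _), lintegral_indicator hs,
    lintegral_const_mul' _ _ (by finiteness), lintegral_const_mul' _ _ (by finiteness)]

lemma eLpNorm_mul_lt_of_setLIntegral_le {ε : ℝ} (hε : 0 < ε) (hf : MemLp f 2 μ)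
    (hf1 : eLpNorm f 2 μ ≤ 1) (hs : MeasurableSet s)
    (hfs : ∫⁻ x in s, ‖f x‖ₑ ^ 2 ∂μ ≤ ENNReal.ofReal (ε ^ 2 / 8))
    (ha : ∀ x ∉ s, ‖m x‖ ≤ ε / 2) (hb : ∀ x ∈ s, ‖m x‖ ≤ 2) :
    eLpNorm (fun x => m x * f x) 2 μ < ENNReal.ofReal ε := by
  have hf1' : ∫⁻ x, ‖f x‖ₑ ^ 2 ∂μ ≤ 1 := eLpNorm_two_sq (μ := μ) f ▸ pow_le_one₀ zero_le hf1
  rw [← ENNReal.pow_lt_pow_left_iff two_ne_zero, eLpNorm_two_sq]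
  calc ∫⁻ x, ‖m x * f x‖ₑ ^ 2 ∂μ
      ≤ ENNReal.ofReal (ε / 2) ^ 2 * ∫⁻ x, ‖f x‖ₑ ^ 2 ∂μ
        + ENNReal.ofReal 2 ^ 2 * ∫⁻ x in s, ‖f x‖ₑ ^ 2 ∂μ :=
        lintegral_enorm_mul_sq_le hf.1 hs ha hb
    _ ≤ ENNReal.ofReal (ε / 2) ^ 2 * 1 + ENNReal.ofReal 2 ^ 2 * ENNReal.ofReal (ε ^ 2 / 8) := by
        gcongr
    _ < ENNReal.ofReal ε ^ 2 := by
        rw [mul_one, ← ENNReal.ofReal_pow (by positivity), ← ENNReal.ofReal_pow zero_le_two,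
          ← ENNReal.ofReal_pow hε.le, ← ENNReal.ofReal_mul (by positivity),
          ← ENNReal.ofReal_add (by positivity) (by positivity),
          ENNReal.ofReal_lt_ofReal_iff (by positivity)]
        nlinarith

end Lebesgue

/-- **Quantitative von Neumann mean ergodic theorem** for multiplication operators on the
unit circle: a uniform bound (independent of the measure and the function) on the rate of
metastability of the ergodic averages. -/
theorem stmt_7 (ε : ℝ) (hε : 0 < ε) (F : ℕ → ℕ) :
    ∃ (K : ℕ) (M : Fin K → ℕ), (∀ i, 1 ≤ M i) ∧
      ∀ (μ : Measure {z : ℂ // ‖z‖ = 1}) (f : {z : ℂ // ‖z‖ = 1} → ℂ),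
        MemLp f 2 μ → eLpNorm f 2 μ ≤ 1 →
        ∃ i : Fin K, ∀ N N' : ℕ, M i ≤ N → N ≤ F (M i) → M i ≤ N' → N' ≤ F (M i) →
          eLpNorm (fun z : {z : ℂ // ‖z‖ = 1} =>
              (N : ℂ)⁻¹ * ∑ n ∈ Finset.Icc 1 N, (z.1 : ℂ) ^ n * f z
              - (N' : ℂ)⁻¹ * ∑ n ∈ Finset.Icc 1 N', (z.1 : ℂ) ^ n * f z) 2 μ
            < ENNReal.ofReal ε := by
  set K := ⌈(ε ^ 2 / 8)⁻¹⌉₊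
  have : Nonempty (Fin K) := ⟨⟨0, Nat.ceil_pos.mpr (by positivity)⟩⟩
  let B : Fin K → Set {z : ℂ // ‖z‖ = 1} := fun k =>
    Subtype.val ⁻¹' badAnnulus ε (scale ε F k) (F (scale ε F k))
  have hB : ∀ k, MeasurableSet (B k) := fun k =>
    (isOpen_badAnnulus _ _ _).measurableSet.preimage measurable_subtype_coe
  have hBd : Pairwise (Disjoint on B) :=
    ((pairwise_disjoint_badAnnulus_scale hε F).comp_of_injective Fin.val_injective).mono
      fun _ _ h => h.preimage _
  refine ⟨K, fun k => scale ε F k, fun k => one_le_scale ε F k, fun μ f hf hf1 => ?_⟩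
  obtain ⟨i, hi⟩ := exists_setLIntegral_le_of_lintegral_le_card_mul (μ := μ)
    (g := fun z => ‖f z‖ₑ ^ 2) hB hBd <| calc
      ∫⁻ z, ‖f z‖ₑ ^ 2 ∂μ = eLpNorm f 2 μ ^ 2 := (eLpNorm_two_sq f).symm
      _ ≤ 1 := pow_le_one₀ zero_le hf1
      _ ≤ Fintype.card (Fin K) * ENNReal.ofReal (ε ^ 2 / 8) := by
        rw [Fintype.card_fin]; exact one_le_natCast_ceil_inv_mul_ofReal (by positivity)
  refine ⟨i, fun N N' hN hNF hN' hN'F => ?_⟩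
  have hmul : ∀ (z : {z : ℂ // ‖z‖ = 1}), (N : ℂ)⁻¹ * ∑ n ∈ Finset.Icc 1 N, (z.1 : ℂ) ^ n * f z
      - (N' : ℂ)⁻¹ * ∑ n ∈ Finset.Icc 1 N', (z.1 : ℂ) ^ n * f z
      = (cesaro N z - cesaro N' z) * f z := fun z => by
    simp only [cesaro, sub_mul, mul_assoc, sum_mul]
  simp only [hmul]
  refine eLpNorm_mul_lt_of_setLIntegral_le hε hf hf1 (hB i) hi
    (fun z hz => norm_cesaro_sub_cesaro_le hε z.2.le (one_le_scale ε F i) hN hNF hN' hN'F hz)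
    (fun z _ => (norm_sub_le _ _).trans ?_)
  linarith [norm_cesaro_le_one z.2.le N, norm_cesaro_le_one z.2.le N']
end

section
/- Let (Φ_N) be a Følner sequence in ℤ, let H be a complex Hilbert space, let C ≥ 0, and let (u_n)_{n∈ℤ} be a family in H with ‖u_n‖ ≤ C for all n. Then for every integer K ≥ 1, limsup_{N→∞} ( ‖𝔼_{n∈Φ_N} u_n‖² − | (2/K²) Σ_{k=−K}^{K} (K−|k|) · 𝔼_{n∈Φ_N} ⟨u_n, u_{n+k}⟩ | ) ≤ 0. -/
/-!
Let `γ(k) = 𝔼_{n∈Φ} ⟨u n, u (n + k)⟩`. Replacing `u n` by its block average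
`v n = K⁻¹ ∑_{j<K} u (n + j)` changes `𝔼_{n∈Φ} u n` only by a Følner error, and by Cauchy–Schwarz
`‖𝔼_{n∈Φ} v n‖² ≤ 𝔼_{n∈Φ} ‖v n‖² = K⁻² ∑_{j,j'<K} 𝔼_{n∈Φ} ⟨u (n + j), u (n + j')⟩`.
Up to another Følner error the inner averages are `γ(j' - j)`, and counting the pairs `(j, j')`
with a given difference turns the double sum into `∑_{|k|≤K} (K - |k|) γ(k)`. All errors are
`O(C² K⁻¹ ∑_{j<K} |(j + Φ) Δ Φ| / |Φ|)`, which tends to `0` along a Følner sequence.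
-/

open Filter Finset
open scoped InnerProductSpace

section Shift

variable {E : Type*} [SeminormedAddCommGroup E]

lemma norm_sum_sub_sum_le_mul_card_symmDiff {ι : Type*} [DecidableEq ι] (s t : Finset ι)
    {f : ι → E} {D : ℝ} (hf : ∀ i, ‖f i‖ ≤ D) :
    ‖∑ i ∈ s, f i - ∑ i ∈ t, f i‖ ≤ D * #(symmDiff s t) := by
  have hsum (w : Finset ι) : ‖∑ i ∈ w, f i‖ ≤ D * #w := by
    simpa [mul_comm] using norm_sum_le_of_le w fun i _ => hf i
  have hcard : (#(symmDiff s t) : ℝ) = #(s \ t) + #(t \ s) := by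
    rw [symmDiff_def, sup_eq_union, card_union_of_disjoint disjoint_sdiff_sdiff, Nat.cast_add]
  rw [← sum_sdiff_sub_sum_sdiff, hcard, mul_add]
  exact (norm_sub_le _ _).trans (add_le_add (hsum _) (hsum _))

lemma norm_sum_comp_add_sub_sum_le {G : Type*} [AddCommGroup G] [DecidableEq G] (s : Finset G)
    (j : G) {g : G → E} {D : ℝ} (hg : ∀ n, ‖g n‖ ≤ D) :
    ‖∑ n ∈ s, g (n + j) - ∑ n ∈ s, g n‖ ≤ D * #(symmDiff (s.image (j + ·)) s) := by
  have hshift : ∑ n ∈ s, g (n + j) = ∑ m ∈ s.image (j + ·), g m := by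
    rw [sum_image fun _ _ _ _ => add_left_cancel]
    simp_rw [add_comm]
  rw [hshift]
  exact norm_sum_sub_sum_le_mul_card_symmDiff _ _ hg

end Shift

noncomputable def folnerDefect {G : Type*} [Add G] [DecidableEq G] (s : Finset G) (k : G) : ℝ :=
  #(symmDiff (s.image (k + ·)) s) / #s

section Average

variable {𝕜 E ι : Type*} [RCLike 𝕜] [SeminormedAddCommGroup E] [NormedSpace 𝕜 E]

lemma norm_inv_card_smul_sum_le (s : Finset ι) {f : ι → E} {C : ℝ} (hC : 0 ≤ C)
    (hf : ∀ i, ‖f i‖ ≤ C) : ‖(#s : 𝕜)⁻¹ • ∑ i ∈ s, f i‖ ≤ C := by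
  rw [norm_smul, norm_inv, RCLike.norm_natCast]
  rcases s.eq_empty_or_nonempty with rfl | hs
  · simpa using hC
  rw [inv_mul_le_iff₀ (by positivity)]
  simpa [mul_comm] using norm_sum_le_of_le s fun i _ => hf i

lemma norm_sub_inv_card_smul_sum_le {s : Finset ι} (hs : s.Nonempty) (x : E) (y : ι → E) :
    ‖x - (#s : 𝕜)⁻¹ • ∑ i ∈ s, y i‖ ≤ (#s : ℝ)⁻¹ * ∑ i ∈ s, ‖x - y i‖ := by
  have hcard : (#s : 𝕜) ≠ 0 := Nat.cast_ne_zero.2 hs.card_ne_zero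
  calc ‖x - (#s : 𝕜)⁻¹ • ∑ i ∈ s, y i‖ = ‖(#s : 𝕜)⁻¹ • ∑ i ∈ s, (x - y i)‖ := by
        rw [sum_sub_distrib, smul_sub, sum_const, ← Nat.cast_smul_eq_nsmul 𝕜, smul_smul,
          inv_mul_cancel₀ hcard, one_smul]
    _ ≤ (#s : ℝ)⁻¹ * ∑ i ∈ s, ‖x - y i‖ := by
        rw [norm_smul, norm_inv, RCLike.norm_natCast]
        gcongr
        exact norm_sum_le _ _

lemma sq_norm_inv_card_smul_sum_le (s : Finset ι) (v : ι → E) :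
    ‖(#s : 𝕜)⁻¹ • ∑ i ∈ s, v i‖ ^ 2 ≤ (#s : ℝ)⁻¹ * ∑ i ∈ s, ‖v i‖ ^ 2 := by
  rw [norm_smul, norm_inv, RCLike.norm_natCast, mul_pow]
  rcases s.eq_empty_or_nonempty with rfl | hs
  · simp
  have hsq : ‖∑ i ∈ s, v i‖ ^ 2 ≤ #s * ∑ i ∈ s, ‖v i‖ ^ 2 :=
    (pow_le_pow_left₀ (norm_nonneg _) (norm_sum_le _ _) 2).trans sq_sum_le_card_mul_sum_sq
  calc (#s : ℝ)⁻¹ ^ 2 * ‖∑ i ∈ s, v i‖ ^ 2 ≤ (#s : ℝ)⁻¹ ^ 2 * (#s * ∑ i ∈ s, ‖v i‖ ^ 2) := by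
        gcongr
    _ = (#s : ℝ)⁻¹ * ∑ i ∈ s, ‖v i‖ ^ 2 := by
        have : (#s : ℝ) ≠ 0 := Nat.cast_ne_zero.2 hs.card_ne_zero
        field_simp

lemma norm_inv_card_smul_sum_sub_comp_add_le {G : Type*} [AddCommGroup G] [DecidableEq G]
    (s : Finset G) (j : G) {f : G → E} {D : ℝ} (hf : ∀ n, ‖f n‖ ≤ D) :
    ‖(#s : 𝕜)⁻¹ • ∑ n ∈ s, f n - (#s : 𝕜)⁻¹ • ∑ n ∈ s, f (n + j)‖ ≤ D * folnerDefect s j := by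
  rw [← smul_sub, norm_smul, norm_inv, RCLike.norm_natCast, norm_sub_rev, folnerDefect,
    mul_div_assoc', div_eq_inv_mul]
  gcongr
  exact norm_sum_comp_add_sub_sum_le s j hf

end Average

lemma sq_norm_le_sq_norm_add_mul_norm_sub {E : Type*} [SeminormedAddCommGroup E] {a b : E}
    {C : ℝ} (ha : ‖a‖ ≤ C) (hb : ‖b‖ ≤ C) : ‖a‖ ^ 2 ≤ ‖b‖ ^ 2 + 2 * C * ‖a - b‖ := by
  have hab := abs_norm_sub_norm_le a b
  nlinarith [mul_nonneg (sub_nonneg.2 (add_le_add ha hb)) (norm_nonneg (a - b)),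
    mul_nonneg (add_nonneg (norm_nonneg a) (norm_nonneg b))
      (sub_nonneg.2 ((le_abs_self _).trans hab))]

lemma card_filter_sub_eq (K : ℕ) {k : ℤ} (hk : |k| ≤ K) :
    (#{p ∈ range K ×ˢ range K | (p.2 : ℤ) - p.1 = k} : ℤ) = K - |k| := by
  rw [Int.abs_eq_natAbs] at hk ⊢
  -- the pairs with difference `k` are `(a + max (-k) 0, a + max k 0)` with `a < K - |k|`
  have hfiber : {p ∈ range K ×ˢ range K | (p.2 : ℤ) - p.1 = k} =
      (range (K - k.natAbs)).image fun a => (a + (-k).toNat, a + k.toNat) := by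
    ext ⟨a, b⟩
    simp only [mem_filter, mem_product, mem_range, mem_image, Prod.mk.injEq]
    constructor
    · rintro ⟨⟨ha, hb⟩, hab⟩
      exact ⟨a - (-k).toNat, by omega, by omega, by omega⟩
    · rintro ⟨c, hc, rfl, rfl⟩
      omega
  rw [hfiber, card_image_of_injective _ fun a b h => by simpa using congrArg Prod.fst h,
    card_range]
  omega

lemma sum_range_sum_range_sub {M : Type*} [AddCommGroup M] (K : ℕ) (f : ℤ → M) :
    ∑ j ∈ range K, ∑ j' ∈ range K, f (j' - j) = ∑ k ∈ Icc (-K : ℤ) K, (K - |k|) • f k := by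
  have hmaps : ∀ p ∈ range K ×ˢ range K, (p.2 : ℤ) - p.1 ∈ Icc (-K : ℤ) K := by
    intro p hp
    simp only [mem_product, mem_range] at hp
    simp only [mem_Icc]
    omega
  rw [← sum_product', ← sum_fiberwise_of_maps_to hmaps]
  refine sum_congr rfl fun k hk => ?_
  rw [sum_congr rfl fun p hp => congrArg f (mem_filter.1 hp).2, sum_const,
    ← card_filter_sub_eq K (abs_le.2 (mem_Icc.1 hk)), natCast_zsmul]

section VanDerCorput

variable (𝕜 : Type*) {H : Type*} [RCLike 𝕜] [NormedAddCommGroup H] [InnerProductSpace 𝕜 H]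

noncomputable def correlation (s : Finset ℤ) (u : ℤ → H) (k : ℤ) : 𝕜 :=
  (#s : 𝕜)⁻¹ * ∑ n ∈ s, ⟪u n, u (n + k)⟫_𝕜

noncomputable def blockAvg (u : ℤ → H) (K : ℕ) (n : ℤ) : H :=
  (K : 𝕜)⁻¹ • ∑ j ∈ range K, u (n + j)

noncomputable def vdcSum (s : Finset ℤ) (u : ℤ → H) (K : ℕ) : 𝕜 :=
  2 / (K : 𝕜) ^ 2 * ∑ k ∈ Icc (-K : ℤ) K, ((K - |k| : ℤ) : 𝕜) * correlation 𝕜 s u k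

variable {𝕜} {u : ℤ → H} {C : ℝ}

lemma norm_inner_le_sq_of_norm_le (hu : ∀ n, ‖u n‖ ≤ C) (m n : ℤ) : ‖⟪u m, u n⟫_𝕜‖ ≤ C ^ 2 :=
  (norm_inner_le_norm _ _).trans (by
    rw [sq]; exact mul_le_mul (hu m) (hu n) (norm_nonneg _) ((norm_nonneg _).trans (hu m)))

lemma norm_correlation_le (s : Finset ℤ) (hu : ∀ n, ‖u n‖ ≤ C) (k : ℤ) :
    ‖correlation 𝕜 s u k‖ ≤ C ^ 2 := by
  rw [correlation, ← smul_eq_mul]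
  exact norm_inv_card_smul_sum_le s (sq_nonneg C) fun n => norm_inner_le_sq_of_norm_le hu n (n + k)

lemma norm_avg_inner_add_sub_correlation_le (s : Finset ℤ) (hu : ∀ n, ‖u n‖ ≤ C) (j j' : ℤ) :
    ‖(#s : 𝕜)⁻¹ * ∑ n ∈ s, ⟪u (n + j), u (n + j')⟫_𝕜 - correlation 𝕜 s u (j' - j)‖ ≤
      C ^ 2 * folnerDefect s j := by
  have hshift : ∀ n, n + j' = n + j + (j' - j) := fun n => by ring
  simp_rw [norm_sub_rev, correlation, hshift, ← smul_eq_mul]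
  exact norm_inv_card_smul_sum_sub_comp_add_le s j fun n => norm_inner_le_sq_of_norm_le hu n _

lemma vdcSum_eq (s : Finset ℤ) (u : ℤ → H) (K : ℕ) :
    vdcSum 𝕜 s u K =
      2 * ((K : 𝕜)⁻¹ ^ 2 * ∑ j ∈ range K, ∑ j' ∈ range K, correlation 𝕜 s u (j' - j)) := by
  rw [vdcSum, sum_range_sum_range_sub]
  simp only [zsmul_eq_mul]
  ring

lemma norm_double_avg_correlation_le (s : Finset ℤ) (hu : ∀ n, ‖u n‖ ≤ C) {K : ℕ} (hK : 0 < K) :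
    ‖(K : 𝕜)⁻¹ ^ 2 * ∑ j ∈ range K, ∑ j' ∈ range K, correlation 𝕜 s u (j' - j)‖ ≤ C ^ 2 := by
  calc _ ≤ (K : ℝ)⁻¹ ^ 2 * ∑ j ∈ range K, ∑ j' ∈ range K, C ^ 2 := by
        rw [norm_mul, norm_pow, norm_inv, RCLike.norm_natCast]
        gcongr
        exact (norm_sum_le _ _).trans (sum_le_sum fun j _ => (norm_sum_le _ _).trans
          (sum_le_sum fun j' _ => norm_correlation_le s hu _))
    _ = C ^ 2 := by
        have : (K : ℝ) ≠ 0 := by positivity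
        simp only [sum_const, card_range, nsmul_eq_mul]
        field_simp

lemma norm_vdcSum_le (s : Finset ℤ) (hu : ∀ n, ‖u n‖ ≤ C) {K : ℕ} (hK : 0 < K) :
    ‖vdcSum 𝕜 s u K‖ ≤ 2 * C ^ 2 := by
  rw [vdcSum_eq, norm_mul, RCLike.norm_ofNat]
  gcongr
  exact norm_double_avg_correlation_le s hu hK

lemma norm_avg_sub_avg_blockAvg_le (s : Finset ℤ) (hu : ∀ n, ‖u n‖ ≤ C) {K : ℕ} (hK : 0 < K) :
    ‖(#s : 𝕜)⁻¹ • ∑ n ∈ s, u n - (#s : 𝕜)⁻¹ • ∑ n ∈ s, blockAvg 𝕜 u K n‖ ≤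
      C * ((K : ℝ)⁻¹ * ∑ j ∈ range K, folnerDefect s j) := by
  have hswap : (#s : 𝕜)⁻¹ • ∑ n ∈ s, blockAvg 𝕜 u K n =
      (#(range K) : 𝕜)⁻¹ • ∑ j ∈ range K, (#s : 𝕜)⁻¹ • ∑ n ∈ s, u (n + j) := by
    simp only [blockAvg, card_range, ← smul_sum]
    rw [smul_comm, sum_comm]
  rw [hswap]
  refine (norm_sub_inv_card_smul_sum_le (nonempty_range_iff.2 hK.ne') _ _).trans ?_
  calc (#(range K) : ℝ)⁻¹ * ∑ j ∈ range K, ‖_ - (#s : 𝕜)⁻¹ • ∑ n ∈ s, u (n + j)‖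
      ≤ (K : ℝ)⁻¹ * ∑ j ∈ range K, C * folnerDefect s j := by
        rw [card_range]
        gcongr with j
        exact norm_inv_card_smul_sum_sub_comp_add_le s j hu
    _ = C * ((K : ℝ)⁻¹ * ∑ j ∈ range K, folnerDefect s j) := by
        rw [← mul_sum]
        ring

lemma avg_sq_norm_blockAvg_eq (s : Finset ℤ) (u : ℤ → H) (K : ℕ) :
    (((#s : ℝ)⁻¹ * ∑ n ∈ s, ‖blockAvg 𝕜 u K n‖ ^ 2 : ℝ) : 𝕜) =
      (K : 𝕜)⁻¹ ^ 2 * ∑ j ∈ range K, ∑ j' ∈ range K,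
        (#s : 𝕜)⁻¹ * ∑ n ∈ s, ⟪u (n + j), u (n + j')⟫_𝕜 := by
  simp only [RCLike.ofReal_mul, RCLike.ofReal_sum, RCLike.ofReal_pow,
    ← inner_self_eq_norm_sq_to_K, blockAvg, inner_smul_left, inner_smul_right, sum_inner,
    inner_sum, map_inv₀, map_natCast, mul_sum]
  rw [sum_comm, sum_congr rfl fun _ _ => sum_comm, sum_comm]
  exact sum_congr rfl fun _ _ => sum_congr rfl fun _ _ => sum_congr rfl fun _ _ => by ring

lemma avg_sq_norm_blockAvg_le (s : Finset ℤ) (hu : ∀ n, ‖u n‖ ≤ C) {K : ℕ} (hK : 0 < K) :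
    (#s : ℝ)⁻¹ * ∑ n ∈ s, ‖blockAvg 𝕜 u K n‖ ^ 2 ≤
      ‖(K : 𝕜)⁻¹ ^ 2 * ∑ j ∈ range K, ∑ j' ∈ range K, correlation 𝕜 s u (j' - j)‖ +
        C ^ 2 * ((K : ℝ)⁻¹ * ∑ j ∈ range K, folnerDefect s j) := by
  set X := (K : 𝕜)⁻¹ ^ 2 * ∑ j ∈ range K, ∑ j' ∈ range K, correlation 𝕜 s u (j' - j)
  set W := (K : 𝕜)⁻¹ ^ 2 * ∑ j ∈ range K, ∑ j' ∈ range K,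
    (#s : 𝕜)⁻¹ * ∑ n ∈ s, ⟪u (n + j), u (n + j')⟫_𝕜 with hW_def
  have hW : (#s : ℝ)⁻¹ * ∑ n ∈ s, ‖blockAvg 𝕜 u K n‖ ^ 2 = ‖W‖ := by
    rw [hW_def, ← avg_sq_norm_blockAvg_eq, RCLike.norm_ofReal, abs_of_nonneg (by positivity)]
  have hWX : ‖W - X‖ ≤ C ^ 2 * ((K : ℝ)⁻¹ * ∑ j ∈ range K, folnerDefect s j) := by
    calc ‖W - X‖ = ‖(K : 𝕜)⁻¹ ^ 2 * ∑ j ∈ range K, ∑ j' ∈ range K,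
          ((#s : 𝕜)⁻¹ * ∑ n ∈ s, ⟪u (n + j), u (n + j')⟫_𝕜 - correlation 𝕜 s u (j' - j))‖ := by
          simp only [W, X, sum_sub_distrib, mul_sub]
      _ ≤ (K : ℝ)⁻¹ ^ 2 * ∑ j ∈ range K, ∑ j' ∈ range K, C ^ 2 * folnerDefect s j := by
          rw [norm_mul, norm_pow, norm_inv, RCLike.norm_natCast]
          gcongr
          exact (norm_sum_le _ _).trans (sum_le_sum fun j _ => (norm_sum_le _ _).trans
            (sum_le_sum fun j' _ => norm_avg_inner_add_sub_correlation_le s hu _ _))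
      _ = C ^ 2 * ((K : ℝ)⁻¹ * ∑ j ∈ range K, folnerDefect s j) := by
          have : (K : ℝ) ≠ 0 := by positivity
          simp only [sum_const, card_range, nsmul_eq_mul, ← mul_sum]
          field_simp
  calc _ = ‖W‖ := hW
    _ ≤ ‖X‖ + ‖W - X‖ := norm_le_norm_add_norm_sub' W X
    _ ≤ _ := by gcongr

theorem sq_norm_avg_le_norm_vdcSum_add (s : Finset ℤ) (hu : ∀ n, ‖u n‖ ≤ C) {K : ℕ}
    (hK : 0 < K) :
    ‖(#s : 𝕜)⁻¹ • ∑ n ∈ s, u n‖ ^ 2 ≤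
      ‖vdcSum 𝕜 s u K‖ + 3 * C ^ 2 * ((K : ℝ)⁻¹ * ∑ j ∈ range K, folnerDefect s j) := by
  have hC : 0 ≤ C := (norm_nonneg _).trans (hu 0)
  set e := (K : ℝ)⁻¹ * ∑ j ∈ range K, folnerDefect s j
  set X := (K : 𝕜)⁻¹ ^ 2 * ∑ j ∈ range K, ∑ j' ∈ range K, correlation 𝕜 s u (j' - j)
  have hblock (n : ℤ) : ‖blockAvg 𝕜 u K n‖ ≤ C := by
    simpa only [blockAvg, card_range] using
      norm_inv_card_smul_sum_le (𝕜 := 𝕜) (range K) hC fun j => hu (n + j)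
  have hX : ‖X‖ ≤ ‖vdcSum 𝕜 s u K‖ := by
    rw [vdcSum_eq, norm_mul (2 : 𝕜), RCLike.norm_ofNat]
    linarith [norm_nonneg X]
  calc ‖(#s : 𝕜)⁻¹ • ∑ n ∈ s, u n‖ ^ 2
      ≤ ‖(#s : 𝕜)⁻¹ • ∑ n ∈ s, blockAvg 𝕜 u K n‖ ^ 2 +
          2 * C * ‖(#s : 𝕜)⁻¹ • ∑ n ∈ s, u n - (#s : 𝕜)⁻¹ • ∑ n ∈ s, blockAvg 𝕜 u K n‖ :=
        sq_norm_le_sq_norm_add_mul_norm_sub (norm_inv_card_smul_sum_le s hC hu)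
          (norm_inv_card_smul_sum_le s hC hblock)
    _ ≤ (#s : ℝ)⁻¹ * ∑ n ∈ s, ‖blockAvg 𝕜 u K n‖ ^ 2 + 2 * C * (C * e) := by
        gcongr
        exacts [sq_norm_inv_card_smul_sum_le s _, norm_avg_sub_avg_blockAvg_le s hu hK]
    _ ≤ ‖X‖ + C ^ 2 * e + 2 * C * (C * e) := by
        gcongr
        exact avg_sq_norm_blockAvg_le s hu hK
    _ ≤ ‖vdcSum 𝕜 s u K‖ + 3 * C ^ 2 * e := by linarith

end VanDerCorput

theorem stmt_10_general {H : Type} [NormedAddCommGroup H] [InnerProductSpace ℂ H]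
    (Φ : ℕ → Finset ℤ)
    (hFol : ∀ k : ℤ, Tendsto (fun N =>
        ((symmDiff (Finset.image (fun n => k + n) (Φ N)) (Φ N)).card : ℝ) / (Φ N).card)
      atTop (nhds 0))
    (C : ℝ) (u : ℤ → H) (hu : ∀ n, ‖u n‖ ≤ C) (K : ℕ) (hK : 1 ≤ K) :
    limsup (fun N =>
      ‖(((Φ N).card : ℂ))⁻¹ • ∑ n ∈ Φ N, u n‖ ^ 2
        - ‖(2 / (K : ℂ) ^ 2) * ∑ k ∈ Finset.Icc (-(K : ℤ)) (K : ℤ),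
            (((K : ℤ) - |k| : ℤ) : ℂ) *
              (((Φ N).card : ℂ)⁻¹ * ∑ n ∈ Φ N, (inner ℂ (u n) (u (n + k)) : ℂ))‖)
      atTop ≤ 0 := by
  set e : ℕ → ℝ := fun N => (K : ℝ)⁻¹ * ∑ j ∈ range K, folnerDefect (Φ N) j
  have hδ (j : ℕ) : Tendsto (fun N => folnerDefect (Φ N) j) atTop (nhds 0) := hFol j
  have he : Tendsto e atTop (nhds 0) := by
    simpa only [sum_const_zero, mul_zero] using
      (tendsto_finsetSum (range K) fun j _ => hδ j).const_mul (K : ℝ)⁻¹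
  refine (limsup_le_limsup (v := fun N => 3 * C ^ 2 * e N) (.of_forall fun N => ?_)
    (isCoboundedUnder_le_of_le atTop (x := -(2 * C ^ 2)) fun N => ?_)
    (he.const_mul _).isBoundedUnder_le).trans_eq ?_
  · exact sub_le_iff_le_add'.2 (sq_norm_avg_le_norm_vdcSum_add (Φ N) hu hK)
  · exact neg_le_sub_iff_le_add.2
      ((norm_vdcSum_le (Φ N) hu hK).trans (le_add_of_nonneg_left (sq_nonneg _)))
  · simpa using (he.const_mul (3 * C ^ 2)).limsup_eq

/-- **Van der Corput estimate** (quantitative version, Lemma `VdC`). -/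
theorem stmt_10 {H : Type} [NormedAddCommGroup H] [InnerProductSpace ℂ H]
    (Φ : ℕ → Finset ℤ) (hne : ∀ N, (Φ N).Nonempty)
    (hFol : ∀ k : ℤ, Tendsto (fun N =>
        ((symmDiff (Finset.image (fun n => k + n) (Φ N)) (Φ N)).card : ℝ) / (Φ N).card)
      atTop (nhds 0))
    (C : ℝ) (hC : 0 ≤ C) (u : ℤ → H) (hu : ∀ n, ‖u n‖ ≤ C) (K : ℕ) (hK : 1 ≤ K) :
    limsup (fun N =>
      ‖(((Φ N).card : ℂ))⁻¹ • ∑ n ∈ Φ N, u n‖ ^ 2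
        - ‖(2 / (K : ℂ) ^ 2) * ∑ k ∈ Finset.Icc (-(K : ℤ)) (K : ℤ),
            (((K : ℤ) - |k| : ℤ) : ℂ) *
              (((Φ N).card : ℂ)⁻¹ * ∑ n ∈ Φ N, (inner ℂ (u n) (u (n + k)) : ℂ))‖)
      atTop ≤ 0 :=
  stmt_10_general Φ hFol C u hu K hK
end

section
/- Let Dom be a set, 𝒯 a set of partially defined maps T: dom(T)⊆Dom→Dom, G a group, and Gb = (G_i)_{i∈ℕ} a prefiltration of finite length d on G. For t∈ℕ let P_t denote the set of Gb[+t]-polynomial maps Dom→G, where Gb[+t] is the shifted prefiltration (G_{i+t})_{i∈ℕ}. Then: (1) each P_t is a group under pointwise multiplication, i.e., it contains the constant identity map and is closed under pointwise products and pointwise inverses; (2) P_0 ⊇ P_1 ⊇ ⋯ ⊇ P_{d+1}, and P_{d+1} consists only of the constant identity map; (3) for all i,j∈ℕ, if g_0∈P_i and g_1∈P_j then the pointwise commutator n ↦ g_0(n)⁻¹g_1(n)⁻¹g_0(n)g_1(n) belongs to P_{i+j}. In particular the Gb-polynomial maps form a group carrying the canonical prefiltration (P_t)_{t∈ℕ}.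 -/
/-!
Let `P t` be the `Gb[+t]`-polynomial maps. Closure of `P t` under products is not directly
amenable to induction on the length, because the derivative of a product `g * h` is the
conjugate `h⁻¹ (D g) h` times `D h`, and the derivative of a commutator is worse. So consider
instead the smallest family `Q t ⊇ P t` which decreases in `t`, is closed under products and
inverses and satisfies `⁅Q i, Q j⁆ ⊆ Q (i + j)`. Every member of `Q t` takes values in `G t`,
and the discrete Leibniz rules show that its derivatives lie in `Q (t + 1)`. Since
`G (d + 1)` is trivial, downward induction on `t` then gives `Q t = P t`.
-/

def IsPolyMap {Dom G ι : Type*} [Group G] (dom : ι → Set Dom) (T : ι → Dom → Dom) :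
    ℕ → (ℕ → Subgroup G) → (Dom → G) → Prop
  | 0, _, g => ∀ x, g x = 1
  | k + 1, Gs, g => (∀ x, g x ∈ Gs 0) ∧
      ∀ i : ι, ∃ D : Dom → G, IsPolyMap dom T k (fun n => Gs (n + 1)) D ∧
        ∀ x ∈ dom i, D x = (g x)⁻¹ * g (T i x)

section
variable {Dom G ι : Type*} [Group G] (dom : ι → Set Dom) (T : ι → Dom → Dom)

theorem isPolyMap_one : ∀ (k : ℕ) (Gs : ℕ → Subgroup G), IsPolyMap dom T k Gs fun _ => 1
  | 0, _ => fun _ => rfl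
  | k + 1, _ => ⟨fun _ => one_mem _,
      fun _ => ⟨fun _ => 1, isPolyMap_one k _, fun _ _ => by simp⟩⟩

/-- `g` is `Gb[+t]`-polynomial, for a prefiltration `Gb = Gs` of length `k - 1`. -/
def IsShiftedPolyMap (k : ℕ) (Gs : ℕ → Subgroup G) (t : ℕ) (g : Dom → G) : Prop :=
  IsPolyMap dom T (k - t) (fun n => Gs (n + t)) g

variable {dom T} {k : ℕ} {Gs : ℕ → Subgroup G} {t : ℕ} {g : Dom → G}

theorem isShiftedPolyMap_iff_of_le (hkt : k ≤ t) :
    IsShiftedPolyMap dom T k Gs t g ↔ ∀ x, g x = 1 := by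
  rw [IsShiftedPolyMap, Nat.sub_eq_zero_of_le hkt, IsPolyMap]

theorem isShiftedPolyMap_iff_of_lt (htk : t < k) :
    IsShiftedPolyMap dom T k Gs t g ↔ (∀ x, g x ∈ Gs t) ∧
      ∀ i, ∃ D : Dom → G, IsShiftedPolyMap dom T k Gs (t + 1) D ∧
        ∀ x ∈ dom i, D x = (g x)⁻¹ * g (T i x) := by
  obtain ⟨f, hf⟩ : ∃ f, k - t = f + 1 := ⟨k - t - 1, by omega⟩
  have hf' : k - (t + 1) = f := by omega
  have hshift : (fun n => Gs (n + (t + 1))) = fun n => Gs (n + 1 + t) := by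
    funext n; rw [Nat.add_right_comm, Nat.add_assoc]
  rw [IsShiftedPolyMap, hf, IsPolyMap]
  simp only [IsShiftedPolyMap, hf', hshift, Nat.zero_add]

theorem IsShiftedPolyMap.mem (hg : IsShiftedPolyMap dom T k Gs t g) (x : Dom) : g x ∈ Gs t := by
  rcases lt_or_ge t k with htk | hkt
  · exact ((isShiftedPolyMap_iff_of_lt htk).1 hg).1 x
  · rw [(isShiftedPolyMap_iff_of_le hkt).1 hg x]
    exact one_mem _

theorem IsShiftedPolyMap.exists_deriv (hg : IsShiftedPolyMap dom T k Gs t g) (i : ι) :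
    ∃ D : Dom → G, IsShiftedPolyMap dom T k Gs (t + 1) D ∧
      ∀ x ∈ dom i, D x = (g x)⁻¹ * g (T i x) := by
  rcases lt_or_ge t k with htk | hkt
  · exact ((isShiftedPolyMap_iff_of_lt htk).1 hg).2 i
  · have hg1 := (isShiftedPolyMap_iff_of_le hkt).1 hg
    refine ⟨fun _ => 1, (isShiftedPolyMap_iff_of_le (by omega)).2 fun _ => rfl, fun x _ => ?_⟩
    rw [hg1, hg1, inv_one, one_mul]

variable (dom T k Gs) in
inductive PolyClosure : ℕ → (Dom → G) → Prop
  | of_isShiftedPolyMap {t : ℕ} {g : Dom → G} :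
      IsShiftedPolyMap dom T k Gs t g → PolyClosure t g
  | of_succ {t : ℕ} {g : Dom → G} : PolyClosure (t + 1) g → PolyClosure t g
  | mul {t : ℕ} {g h : Dom → G} :
      PolyClosure t g → PolyClosure t h → PolyClosure t fun x => g x * h x
  | inv {t : ℕ} {g : Dom → G} : PolyClosure t g → PolyClosure t fun x => (g x)⁻¹
  | commutator {i j : ℕ} {g h : Dom → G} :
      PolyClosure i g → PolyClosure j h →
        PolyClosure (i + j) fun x => (g x)⁻¹ * (h x)⁻¹ * g x * h x

namespace PolyClosure

theorem congr {g' : Dom → G} (hg : PolyClosure dom T k Gs t g) (h : ∀ x, g x = g' x) :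
    PolyClosure dom T k Gs t g' :=
  funext h ▸ hg

theorem of_le {s : ℕ} (hts : t ≤ s) (hg : PolyClosure dom T k Gs s g) :
    PolyClosure dom T k Gs t g := by
  induction s, hts using Nat.le_induction with
  | base => exact hg
  | succ s _ ih => exact ih hg.of_succ

theorem conj {s : ℕ} {u : Dom → G} (hg : PolyClosure dom T k Gs t g)
    (hu : PolyClosure dom T k Gs s u) :
    PolyClosure dom T k Gs t fun x => (u x)⁻¹ * g x * u x :=
  (hg.mul ((hg.commutator hu).of_le (Nat.le_add_right t s))).congr fun x => by group

theorem mem (hanti : ∀ i j : ℕ, i ≤ j → Gs j ≤ Gs i)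
    (hcomm : ∀ i j : ℕ, ∀ a ∈ Gs i, ∀ b ∈ Gs j, a⁻¹ * b⁻¹ * a * b ∈ Gs (i + j))
    (hg : PolyClosure dom T k Gs t g) (x : Dom) : g x ∈ Gs t := by
  induction hg with
  | of_isShiftedPolyMap hg => exact hg.mem x
  | of_succ _ ih => exact hanti _ _ (Nat.le_succ _) ih
  | mul _ _ ihg ihh => exact mul_mem ihg ihh
  | inv _ ih => exact inv_mem ih
  | commutator _ _ ihg ihh => exact hcomm _ _ _ ihg _ ihh

/-- Leibniz rule for commutators: if `a`, `b` are the derivatives of `g`, `h`, then the derivative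
of `c = ⁅g, h⁆` is `c⁻¹ ⁅g a, h b⁆`. -/
theorem commutator_mul_mul {i j : ℕ} {h a b : Dom → G} (hg : PolyClosure dom T k Gs i g)
    (hh : PolyClosure dom T k Gs j h) (ha : PolyClosure dom T k Gs (i + 1) a)
    (hb : PolyClosure dom T k Gs (j + 1) b) :
    PolyClosure dom T k Gs (i + j + 1) fun x =>
      ((g x)⁻¹ * (h x)⁻¹ * g x * h x)⁻¹ *
        ((g x * a x)⁻¹ * (h x * b x)⁻¹ * (g x * a x) * (h x * b x)) := by
  have hc := hg.commutator hh
  have hgb : PolyClosure dom T k Gs (i + j + 1) _ :=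
    ((hg.commutator hb).conj ha).conj hc
  have hcba : PolyClosure dom T k Gs (i + j + 1) _ :=
    hc.commutator ((hb.of_le (Nat.le_add_left 1 j)).mul (ha.of_le (Nat.le_add_left 1 i)))
  have hab : PolyClosure dom T k Gs (i + j + 1) _ :=
    (ha.commutator hb).of_le (by omega)
  have hah : PolyClosure dom T k Gs (i + j + 1) _ :=
    ((ha.commutator hh).conj hb).of_le (by omega)
  exact (((hgb.mul hcba).mul hab).mul hah).congr fun x => by group

theorem exists_deriv (hg : PolyClosure dom T k Gs t g) (l : ι) :
    ∃ D : Dom → G, PolyClosure dom T k Gs (t + 1) D ∧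
      ∀ x ∈ dom l, D x = (g x)⁻¹ * g (T l x) := by
  induction hg with
  | of_isShiftedPolyMap hg =>
    obtain ⟨D, hD, hDg⟩ := hg.exists_deriv l
    exact ⟨D, of_isShiftedPolyMap hD, hDg⟩
  | of_succ _ ih =>
    obtain ⟨D, hD, hDg⟩ := ih
    exact ⟨D, hD.of_succ, hDg⟩
  | @mul t g h hg hh ihg ihh =>
    obtain ⟨a, ha, hag⟩ := ihg
    obtain ⟨b, hb, hbh⟩ := ihh
    refine ⟨_, (ha.conj hh).mul hb, fun x hx => ?_⟩
    simp only [hag x hx, hbh x hx]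
    group
  | @inv t g hg ih =>
    obtain ⟨a, ha, hag⟩ := ih
    refine ⟨_, ha.inv.conj hg.inv, fun x hx => ?_⟩
    simp only [hag x hx]
    group
  | @commutator i j g h hg hh ihg ihh =>
    obtain ⟨a, ha, hag⟩ := ihg
    obtain ⟨b, hb, hbh⟩ := ihh
    refine ⟨_, hg.commutator_mul_mul hh ha hb, fun x hx => ?_⟩
    simp only [hag x hx, hbh x hx]
    group

theorem isShiftedPolyMap (hanti : ∀ i j : ℕ, i ≤ j → Gs j ≤ Gs i)
    (hcomm : ∀ i j : ℕ, ∀ a ∈ Gs i, ∀ b ∈ Gs j, a⁻¹ * b⁻¹ * a * b ∈ Gs (i + j))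
    (hbot : Gs k = ⊥) {t : ℕ} {g : Dom → G} (hg : PolyClosure dom T k Gs t g) :
    IsShiftedPolyMap dom T k Gs t g := by
  rcases lt_or_ge t k with htk | hkt
  · refine (isShiftedPolyMap_iff_of_lt htk).2 ⟨hg.mem hanti hcomm, fun i => ?_⟩
    obtain ⟨D, hD, hDg⟩ := hg.exists_deriv i
    exact ⟨D, hD.isShiftedPolyMap hanti hcomm hbot, hDg⟩
  · refine (isShiftedPolyMap_iff_of_le hkt).2 fun x => ?_
    have hx := hanti k t hkt (hg.mem hanti hcomm x)
    rwa [hbot, Subgroup.mem_bot] at hx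
termination_by k - t

end PolyClosure

end

/-- **Polynomial maps into a nilpotent group form a group** (Theorem `thm:poly-group` /
Corollary `cor:poly-group`): writing `P t` for the set of `Gb[+t]`-polynomial maps,
each `P t` is a group under pointwise operations, `P 0 ⊇ P 1 ⊇ ⋯ ⊇ P (d+1)`, the set
`P (d+1)` consists only of the constant identity, and commutators map `P i × P j` to
`P (i+j)`. -/
theorem stmt_12 {Dom G ι : Type*} [Group G] (dom : ι → Set Dom) (T : ι → Dom → Dom)
    (Gs : ℕ → Subgroup G) (d : ℕ)
    (hanti : ∀ i j : ℕ, i ≤ j → Gs j ≤ Gs i)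
    (hcomm : ∀ i j : ℕ, ∀ a ∈ Gs i, ∀ b ∈ Gs j, a⁻¹ * b⁻¹ * a * b ∈ Gs (i + j))
    (hlen : Gs (d + 1) = ⊥) :
    (∀ t : ℕ,
      IsPolyMap dom T (d + 1 - t) (fun n => Gs (n + t)) (fun _ => 1) ∧
      (∀ g₀ g₁ : Dom → G,
        IsPolyMap dom T (d + 1 - t) (fun n => Gs (n + t)) g₀ →
        IsPolyMap dom T (d + 1 - t) (fun n => Gs (n + t)) g₁ →
        IsPolyMap dom T (d + 1 - t) (fun n => Gs (n + t)) (fun x => g₀ x * g₁ x)) ∧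
      (∀ g : Dom → G,
        IsPolyMap dom T (d + 1 - t) (fun n => Gs (n + t)) g →
        IsPolyMap dom T (d + 1 - t) (fun n => Gs (n + t)) (fun x => (g x)⁻¹))) ∧
    (∀ t : ℕ, ∀ g : Dom → G,
      IsPolyMap dom T (d + 1 - (t + 1)) (fun n => Gs (n + (t + 1))) g →
      IsPolyMap dom T (d + 1 - t) (fun n => Gs (n + t)) g) ∧
    (∀ g : Dom → G,
      IsPolyMap dom T (d + 1 - (d + 1)) (fun n => Gs (n + (d + 1))) g ↔ ∀ x, g x = 1) ∧
    (∀ i j : ℕ, ∀ g₀ g₁ : Dom → G,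
      IsPolyMap dom T (d + 1 - i) (fun n => Gs (n + i)) g₀ →
      IsPolyMap dom T (d + 1 - j) (fun n => Gs (n + j)) g₁ →
      IsPolyMap dom T (d + 1 - (i + j)) (fun n => Gs (n + (i + j)))
        (fun x => (g₀ x)⁻¹ * (g₁ x)⁻¹ * g₀ x * g₁ x)) := by
  have of_poly {t : ℕ} {g : Dom → G} (hg : IsShiftedPolyMap dom T (d + 1) Gs t g) :
      PolyClosure dom T (d + 1) Gs t g :=
    .of_isShiftedPolyMap hg
  have closed {t : ℕ} {g : Dom → G} (hg : PolyClosure dom T (d + 1) Gs t g) :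
      IsShiftedPolyMap dom T (d + 1) Gs t g :=
    hg.isShiftedPolyMap hanti hcomm hlen
  refine ⟨fun t => ⟨isPolyMap_one dom T _ _, ?_, ?_⟩, ?_, fun g => ?_, ?_⟩
  · exact fun g₀ g₁ h₀ h₁ => closed ((of_poly h₀).mul (of_poly h₁))
  · exact fun g hg => closed (.inv (of_poly hg))
  · exact fun t g hg => closed (.of_succ (of_poly hg))
  · exact isShiftedPolyMap_iff_of_le le_rfl
  · exact fun i j g₀ g₁ h₀ h₁ => closed ((of_poly h₀).commutator (of_poly h₁))
end

section
/- Let G be a nilpotent group generated by a finite set F, and let H ≤ G be a subgroup such that for every f∈F there exists an integer r ≥ 1 with f^r∈H. Then H has finite index in G. -/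
/-!
Induction on the nilpotency class. Let `Γ` be the last nontrivial term of the lower central
series; it is central, and by induction applied to `G ⧸ Γ` the subgroup `H ⊔ Γ = HΓ` has finite
index, hence is finitely generated. As `Γ` is central, `H` is normal in `HΓ` with abelian
quotient, so it suffices that this quotient is torsion, i.e. that every element of `Γ` has a
positive power in `H`. `Γ` is generated by commutators `⁅x, g⁆` with `⁅x, -⁆` central-valued,
and such commutators are bilinear: if all `e`-th powers lie in `HΓ`, then `⁅x, g⁆ ^ (e * e)` is a
commutator of two elements of `H`. In the abelian base case the generators themselves commute.
-/

open Subgroup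
open scoped IsMulCommutative commutatorElement

section Commutators

variable {G : Type*} [Group G]

theorem commutatorElement_mul_left_of_mem_center {z : G} (hz : z ∈ center G) (a b : G) :
    ⁅a * z, b⁆ = ⁅a, b⁆ := by
  have : ⁅z, b⁆ = 1 := commutatorElement_eq_one_iff_mul_comm.mpr (mem_center_iff.mp hz b).symm
  simp [commutatorElement_mul_left_eq_conj_mul, this]

theorem commutatorElement_mul_right_of_mem_center {z : G} (hz : z ∈ center G) (a b : G) :
    ⁅a, b * z⁆ = ⁅a, b⁆ := by
  rw [← commutatorElement_inv, commutatorElement_mul_left_of_mem_center hz, commutatorElement_inv]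

theorem commutatorElement_pow_right {x y : G} (h : ⁅x, y⁆ ∈ center G) (n : ℕ) :
    ⁅x, y ^ n⁆ = ⁅x, y⁆ ^ n := by
  induction n with
  | zero => simp
  | succ n ih =>
    rw [pow_succ, commutatorElement_mul_right_eq_mul_conj, mul_assoc _ (y ^ n),
      mem_center_iff.mp h (y ^ n), ← mul_assoc, mul_inv_cancel_right, ih, pow_succ]

theorem commutatorElement_pow_left {x y : G} (h : ⁅x, y⁆ ∈ center G) (n : ℕ) :
    ⁅x ^ n, y⁆ = ⁅x, y⁆ ^ n := by
  have h' : ⁅y, x⁆ ∈ center G := by rw [← commutatorElement_inv]; exact inv_mem h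
  rw [← commutatorElement_inv, commutatorElement_pow_right h', ← inv_pow, commutatorElement_inv]

end Commutators

namespace Subgroup

variable {G : Type*} [Group G]

theorem normal_of_le_center {N : Subgroup G} (hN : N ≤ center G) : N.Normal where
  conj_mem z hz g := by
    rwa [mem_center_iff.mp (hN hz) g, mul_inv_cancel_right]

theorem exists_pow_mem_of_finiteIndex (H : Subgroup G) [H.FiniteIndex] :
    ∃ e, 0 < e ∧ ∀ g : G, g ^ e ∈ H :=
  ⟨H.normalCore.index, Nat.pos_of_ne_zero FiniteIndex.index_ne_zero,
    fun g => H.normalCore_le (H.normalCore.pow_index_mem g)⟩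

theorem exists_pow_mem_of_mem_closure {H : Subgroup G} {S : Set G} (hS : S ⊆ center G)
    (hpow : ∀ s ∈ S, ∃ m, 0 < m ∧ s ^ m ∈ H) {x : G} (hx : x ∈ closure S) :
    ∃ m, 0 < m ∧ x ^ m ∈ H := by
  induction hx using closure_induction with
  | mem s hs => exact hpow s hs
  | one => exact ⟨1, one_pos, by simp [H.one_mem]⟩
  | mul a b ha _ iha ihb =>
    obtain ⟨m, hm, hma⟩ := iha
    obtain ⟨k, hk, hkb⟩ := ihb
    have hab : Commute a b := mem_center_iff.mp ((closure_le _).mpr hS ha) b |>.symm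
    refine ⟨m * k, Nat.mul_pos hm hk, ?_⟩
    rw [hab.mul_pow, pow_mul, mul_comm m k, pow_mul b]
    exact H.mul_mem (H.pow_mem hma k) (H.pow_mem hkb m)
  | inv a _ iha =>
    obtain ⟨m, hm, hma⟩ := iha
    exact ⟨m, hm, by simpa [inv_pow] using H.inv_mem hma⟩


theorem finiteIndex_of_commutator_le [Group.FG G] {L : Subgroup G}
    (hL : _root_.commutator G ≤ L)
    (hpow : ∀ g : G, ∃ m, 0 < m ∧ g ^ m ∈ L) : L.FiniteIndex := by
  have := Normal.of_commutator_le (G := G) hL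
  have := Normal.quotient_commutative_iff_commutator_le.mpr hL
  have htors : IsMulTorsion (G ⧸ L) := by
    rintro ⟨g⟩
    obtain ⟨m, hm, hgm⟩ := hpow g
    exact isOfFinOrder_iff_pow_eq_one.mpr
      ⟨m, hm, (QuotientGroup.eq_one_iff (g ^ m)).mpr hgm⟩
  have := CommGroup.finite_of_fg_isMulTorsion _ htors
  exact finiteIndex_of_finite_quotient

theorem finiteIndex_of_finiteIndex_sup_of_le_center [Group.FG G] {H N : Subgroup G}
    (hN : N ≤ center G) [(H ⊔ N).FiniteIndex] (hpow : ∀ z ∈ N, ∃ m, 0 < m ∧ z ^ m ∈ H) :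
    H.FiniteIndex := by
  have := normal_of_le_center hN
  set K := H ⊔ N
  have hK : ∀ k ∈ K, ∃ h ∈ H, ∃ z ∈ N, h * z = k := fun k => mem_sup_of_normal_right.mp
  have hcomm : _root_.commutator K ≤ H.subgroupOf K := by
    refine commutator_le.mpr fun a _ b _ => ?_
    obtain ⟨h, hh, z, hz, ha⟩ := hK a a.2
    obtain ⟨h', hh', z', hz', hb⟩ := hK b b.2
    change ⁅(a : G), (b : G)⁆ ∈ H
    rw [← ha, ← hb,
      commutatorElement_mul_left_of_mem_center (hN hz),
      commutatorElement_mul_right_of_mem_center (hN hz')]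
    exact H.commutator_le_self (commutator_mem_commutator hh hh')
  have hpowK : ∀ k : K, ∃ m, 0 < m ∧ k ^ m ∈ H.subgroupOf K := by
    rintro ⟨k, hk⟩
    obtain ⟨h, hh, z, hz, rfl⟩ := hK k hk
    obtain ⟨m, hm, hzm⟩ := hpow z hz
    refine ⟨m, hm, ?_⟩
    change (h * z) ^ m ∈ H
    rw [Commute.mul_pow (mem_center_iff.mp (hN hz) h)]
    exact H.mul_mem (H.pow_mem hh m) hzm
  have hHK := finiteIndex_of_commutator_le hcomm hpowK
  exact ⟨by
    rw [← relIndex_mul_index (le_sup_left : H ≤ K)]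
    exact mul_ne_zero hHK.index_ne_zero FiniteIndex.index_ne_zero⟩

theorem exists_pow_commutatorElement_mem {H N : Subgroup G} (hN : N ≤ center G)
    [(H ⊔ N).FiniteIndex] {x : G} (hx : ∀ y, ⁅x, y⁆ ∈ center G) (g : G) :
    ∃ m, 0 < m ∧ ⁅x, g⁆ ^ m ∈ H := by
  have := normal_of_le_center hN
  obtain ⟨e, he, hpow⟩ := (H ⊔ N).exists_pow_mem_of_finiteIndex
  obtain ⟨a, ha, z, hz, hxe⟩ := mem_sup_of_normal_right.mp (hpow x)
  obtain ⟨b, hb, w, hw, hge⟩ := mem_sup_of_normal_right.mp (hpow g)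
  refine ⟨e * e, Nat.mul_pos he he, ?_⟩
  -- bilinearity: `⁅x, g⁆ ^ (e * e) = ⁅x ^ e, g ^ e⁆ = ⁅a * z, b * w⁆ = ⁅a, b⁆`
  rw [pow_mul, ← commutatorElement_pow_right (hx g), ← commutatorElement_pow_left (hx _), ← hxe,
    ← hge, commutatorElement_mul_left_of_mem_center (hN hz),
    commutatorElement_mul_right_of_mem_center (hN hw)]
  exact H.commutator_le_self (commutator_mem_commutator ha hb)

theorem finiteIndex_sup_of_finiteIndex_map {H N : Subgroup G} [N.Normal]
    [(H.map (QuotientGroup.mk' N)).FiniteIndex] : (H ⊔ N).FiniteIndex := by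
  rw [← QuotientGroup.ker_mk' N, ← comap_map_eq]
  exact ⟨by
    rw [index_comap_of_surjective _ (QuotientGroup.mk'_surjective N)]
    exact FiniteIndex.index_ne_zero⟩

theorem lowerCentralSeries_quotient_lowerCentralSeries_eq_bot (n : ℕ) :
    (⊤ : Subgroup (G ⧸ (⊤ : Subgroup G).lowerCentralSeries n)).lowerCentralSeries n = ⊥ := by
  rw [← map_top_of_surjective _ (QuotientGroup.mk'_surjective _), ← map_lowerCentralSeries,
    map_eq_bot_iff, QuotientGroup.ker_mk']

theorem lowerCentralSeries_le_center_of_succ_eq_bot {n : ℕ}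
    (h : (⊤ : Subgroup G).lowerCentralSeries (n + 1) = ⊥) :
    (⊤ : Subgroup G).lowerCentralSeries n ≤ center G := by
  rwa [lowerCentralSeries_succ, commutator_eq_bot_iff_le_centralizer, coe_top,
    centralizer_univ] at h

theorem finiteIndex_of_pow_mem_of_lowerCentralSeries_eq_bot [Group.FG G] {F : Set G}
    (hgen : closure F = ⊤) {H : Subgroup G}
    (hroot : ∀ f ∈ F, ∃ r, 0 < r ∧ f ^ r ∈ H) {n : ℕ}
    (hn : (⊤ : Subgroup G).lowerCentralSeries (n + 1) = ⊥) : H.FiniteIndex := by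
  induction n generalizing G with
  | zero =>
    have hcenter : ⊤ ≤ center G := lowerCentralSeries_le_center_of_succ_eq_bot hn
    refine finiteIndex_of_commutator_le (hn.le.trans bot_le) fun g => ?_
    exact exists_pow_mem_of_mem_closure (fun f _ => hcenter trivial) hroot (hgen ▸ mem_top g)
  | succ m ih =>
    set Γ := (⊤ : Subgroup G).lowerCentralSeries (m + 1)
    have hcenter : Γ ≤ center G := lowerCentralSeries_le_center_of_succ_eq_bot hn
    have : (H.map (QuotientGroup.mk' Γ)).FiniteIndex := by
      refine ih (F := QuotientGroup.mk' Γ '' F) ?_ ?_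
        (lowerCentralSeries_quotient_lowerCentralSeries_eq_bot _)
      · rw [← MonoidHom.map_closure, hgen,
          map_top_of_surjective _ (QuotientGroup.mk'_surjective Γ)]
      · rintro _ ⟨f, hf, rfl⟩
        obtain ⟨r, hr, hfr⟩ := hroot f hf
        exact ⟨r, hr, ⟨f ^ r, hfr, map_pow _ f r⟩⟩
    have : (H ⊔ Γ).FiniteIndex := finiteIndex_sup_of_finiteIndex_map
    refine finiteIndex_of_finiteIndex_sup_of_le_center hcenter fun z hz => ?_
    refine exists_pow_mem_of_mem_closure ?_ ?_ hz
    · rintro _ ⟨x, hx, g, -, rfl⟩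
      exact hcenter (commutator_mem_commutator hx (mem_top g))
    · rintro _ ⟨x, hx, g, -, rfl⟩
      exact exists_pow_commutatorElement_mem hcenter
        (fun y => hcenter (commutator_mem_commutator hx (mem_top y))) g

end Subgroup

/-- In a nilpotent group generated by a finite set `F`, a subgroup containing a positive
power of each generator has finite index. -/
theorem stmt_13 {G : Type*} [Group G] [Group.IsNilpotent G]
    (F : Set G) (hFfin : F.Finite) (hgen : Subgroup.closure F = ⊤)
    (H : Subgroup G) (hroot : ∀ f ∈ F, ∃ r : ℕ, 1 ≤ r ∧ f ^ r ∈ H) :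
    H.FiniteIndex := by
  have : Group.FG G := Group.fg_iff.mpr ⟨F, hgen, hFfin⟩
  obtain ⟨n, hn⟩ := Subgroup.nilpotent_iff_lowerCentralSeries.mp ‹Group.IsNilpotent G›
  exact finiteIndex_of_pow_mem_of_lowerCentralSeries_eq_bot hgen hroot
    (le_bot_iff.mp (hn ▸ Subgroup.lowerCentralSeries_antitone ⊤ n.le_succ))
end

section
/- Let G be a nilpotent group and H ≤ G a finitely generated subgroup. Define √H := {g∈G : ∃ r ≥ 1, g^r∈H}. Then: (1) √H is a subgroup of G; (2) H has finite index in every finitely generated subgroup K of G with H ≤ K ≤ √H; (3) every g∈√H commensurates H, i.e., H and gHg⁻¹ are commensurable subgroups, so that √H is contained in the commensurator of H in G. -/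
/-!
Roots of `S` are closed under products by a lemma of P. Hall's type: if a group of class `≤ c`
is generated by elements having positive powers in `S`, then every element has one. Inductively,
every element has a power in `S · γ_c`; the central subgroup `γ_c` is generated by commutators
`⁅p, q⁆` with `p ∈ γ_(c-1)`, and since `⁅p, ·⁆` and `⁅·, q⁆` are multiplicative into the centre
and kill central factors, `p ^ m ∈ s γ_c` and `q ^ k ∈ t γ_c` give `⁅p, q⁆ ^ (k * m) = ⁅s, t⁆ ∈ S`.

For the index, induct on the nilpotency class of the finitely generated group `K`: `H · Z(K)`
has finite index, so it is finitely generated and equals `H · Z₀` for a finitely generated central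
`Z₀`, and `Z₀ / (Z₀ ∩ H)` is a finitely generated abelian torsion group. Finally a root `g` of `H`
normalises `⟨H, g⟩`, in which `H` has finite index, so `g` commensurates `H`.
-/

open scoped commutatorElement

section Commutator

variable {G : Type*} [Group G] {a b n : G}

theorem commutatorElement_mul_right_of_mem_center_s14 (hn : n ∈ Subgroup.center G) :
    ⁅a, b * n⁆ = ⁅a, b⁆ := by
  calc ⁅a, b * n⁆ = a * b * (n * a⁻¹) * n⁻¹ * b⁻¹ := by group
    _ = ⁅a, b⁆ := by rw [← Subgroup.mem_center_iff.mp hn a⁻¹]; group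

theorem commutatorElement_mul_left_of_mem_center_s14 (hn : n ∈ Subgroup.center G) :
    ⁅a * n, b⁆ = ⁅a, b⁆ := by
  calc ⁅a * n, b⁆ = a * (n * b) * n⁻¹ * a⁻¹ * b⁻¹ := by group
    _ = ⁅a, b⁆ := by rw [← Subgroup.mem_center_iff.mp hn b]; group

theorem commutatorElement_pow_right_s14 (ha : ∀ y, ⁅a, y⁆ ∈ Subgroup.center G) (b : G) (k : ℕ) :
    ⁅a, b ^ k⁆ = ⁅a, b⁆ ^ k := by
  induction k with
  | zero => simp
  | succ k ih =>
    rw [pow_succ, commutatorElement_mul_right_eq_mul_conj, ih, mul_assoc _ (b ^ k),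
      Subgroup.mem_center_iff.mp (ha b), mul_assoc, mul_inv_cancel_right, pow_succ]

theorem commutatorElement_pow_left_s14 (ha : ∀ y, ⁅a, y⁆ ∈ Subgroup.center G) (b : G) (k : ℕ) :
    ⁅a ^ k, b⁆ = ⁅a, b⁆ ^ k := by
  induction k with
  | zero => simp
  | succ k ih =>
    have hcen : ⁅a ^ k, b⁆ ∈ Subgroup.center G := ih ▸ pow_mem (ha b) k
    rw [pow_succ', commutatorElement_mul_left_eq_conj_mul, Subgroup.mem_center_iff.mp hcen a,
      mul_inv_cancel_right, ih, pow_succ]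

end Commutator

namespace Subgroup

variable {G : Type*} [Group G]

def rootSet (H : Subgroup G) : Set G := {g | ∃ r : ℕ, 1 ≤ r ∧ g ^ r ∈ H}

variable {H S N : Subgroup G} {a b g : G}

theorem mem_rootSet : g ∈ H.rootSet ↔ ∃ r : ℕ, 1 ≤ r ∧ g ^ r ∈ H := Iff.rfl

theorem subset_rootSet (H : Subgroup G) : (H : Set G) ⊆ H.rootSet :=
  fun g hg ↦ ⟨1, le_rfl, by rwa [pow_one]⟩

theorem inv_mem_rootSet (hg : g ∈ H.rootSet) : g⁻¹ ∈ H.rootSet := by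
  obtain ⟨r, hr, h⟩ := hg
  exact ⟨r, hr, by rw [inv_pow]; exact H.inv_mem h⟩

theorem mem_rootSet_of_pow_mem_rootSet {k : ℕ} (hk : 1 ≤ k) (hg : g ^ k ∈ H.rootSet) :
    g ∈ H.rootSet := by
  obtain ⟨r, hr, h⟩ := hg
  exact ⟨k * r, Nat.one_le_iff_ne_zero.mpr (by positivity), by rwa [pow_mul]⟩

theorem _root_.Commute.mul_mem_rootSet (hab : Commute a b) (ha : a ∈ H.rootSet)
    (hb : b ∈ H.rootSet) : a * b ∈ H.rootSet := by
  obtain ⟨r, hr, har⟩ := ha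
  obtain ⟨s, hs, hbs⟩ := hb
  refine ⟨r * s, Nat.one_le_iff_ne_zero.mpr (by positivity), ?_⟩
  rw [hab.mul_pow, pow_mul, mul_comm r s, pow_mul]
  exact H.mul_mem (pow_mem har s) (pow_mem hbs r)

theorem mem_rootSet_comap {G' : Type*} [Group G'] {f : G →* G'} {H : Subgroup G'} :
    g ∈ (H.comap f).rootSet ↔ f g ∈ H.rootSet := by
  simp only [mem_rootSet, mem_comap, map_pow]

theorem map_mem_rootSet_map {G' : Type*} [Group G'] (f : G →* G') (hg : g ∈ H.rootSet) :
    f g ∈ (H.map f).rootSet := by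
  obtain ⟨r, hr, h⟩ := hg
  exact ⟨r, hr, by rw [← map_pow]; exact mem_map_of_mem f h⟩

theorem closure_subset_rootSet_of_le_center {X : Set G} (hX : X ⊆ H.rootSet)
    (hcen : closure X ≤ center G) : (closure X : Set G) ⊆ H.rootSet := fun _ hg ↦ by
  induction hg using closure_induction with
  | mem x hx => exact hX hx
  | one => exact H.subset_rootSet H.one_mem
  | mul x y hx _ hx' hy' =>
    exact Commute.mul_mem_rootSet (mem_center_iff.mp (hcen hx) y).symm hx' hy'
  | inv x _ hx' => exact inv_mem_rootSet hx'

theorem mem_rootSet_of_mem_rootSet_sup [N.Normal] (hN : N ≤ center G)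
    (hNS : (N : Set G) ⊆ S.rootSet) (hg : g ∈ (S ⊔ N).rootSet) : g ∈ S.rootSet := by
  obtain ⟨k, hk, hgk⟩ := hg
  obtain ⟨s, hs, n, hn, hsn⟩ := mem_sup_of_normal_right.mp hgk
  refine mem_rootSet_of_pow_mem_rootSet hk (hsn ▸ ?_)
  exact Commute.mul_mem_rootSet (mem_center_iff.mp (hN hn) s) (S.subset_rootSet hs) (hNS hn)

theorem commutatorElement_mem_rootSet [N.Normal] (hN : N ≤ center G)
    (hcen : ∀ y, ⁅a, y⁆ ∈ center G) (ha : a ∈ (S ⊔ N).rootSet) (hb : b ∈ (S ⊔ N).rootSet) :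
    ⁅a, b⁆ ∈ S.rootSet := by
  obtain ⟨m, hm, ham⟩ := ha
  obtain ⟨k, hk, hbk⟩ := hb
  obtain ⟨s, hs, n, hn, hsn⟩ := mem_sup_of_normal_right.mp ham
  obtain ⟨t, ht, n', hn', htn⟩ := mem_sup_of_normal_right.mp hbk
  refine ⟨k * m, Nat.one_le_iff_ne_zero.mpr (by positivity), ?_⟩
  rw [pow_mul, ← commutatorElement_pow_right_s14 hcen, ← commutatorElement_pow_left_s14 hcen, ← hsn,
    ← htn, commutatorElement_mul_right_of_mem_center_s14 (hN hn'),
    commutatorElement_mul_left_of_mem_center_s14 (hN hn), commutatorElement_def]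
  exact S.mul_mem (S.mul_mem (S.mul_mem hs ht) (S.inv_mem hs)) (S.inv_mem ht)

theorem forall_mem_rootSet_of_lowerCentralSeries_succ_eq_bot {L : Type*} [Group L] {c : ℕ}
    (hc : (⊤ : Subgroup L).lowerCentralSeries (c + 1) = ⊥) {X : Set L} (hX : closure X = ⊤)
    {S : Subgroup L} (hXS : X ⊆ S.rootSet)
    (hroot : ∀ g, g ∈ (S ⊔ (⊤ : Subgroup L).lowerCentralSeries c).rootSet) (g : L) :
    g ∈ S.rootSet := by
  have hN : (⊤ : Subgroup L).lowerCentralSeries c ≤ center L :=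
    commutator_top_right_eq_bot_iff_le_center.mp hc
  refine mem_rootSet_of_mem_rootSet_sup hN ?_ (hroot g)
  cases c with
  | zero =>
    rw [lowerCentralSeries_zero, ← hX] at hN ⊢
    exact closure_subset_rootSet_of_le_center hXS hN
  | succ c =>
    rw [lowerCentralSeries_succ, commutator_def]
    refine closure_subset_rootSet_of_le_center ?_
      (by rwa [lowerCentralSeries_succ, commutator_def] at hN)
    rintro _ ⟨p, hp, q, -, rfl⟩
    exact commutatorElement_mem_rootSet hN
      (fun y ↦ hN (commutator_mem_commutator hp (mem_top y))) (hroot p) (hroot q)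

theorem mem_rootSet_of_closure_eq_top {L : Type*} [Group L] {c : ℕ}
    (hc : (⊤ : Subgroup L).lowerCentralSeries c = ⊥) {X : Set L} (hX : closure X = ⊤)
    {S : Subgroup L} (hXS : X ⊆ S.rootSet) (g : L) : g ∈ S.rootSet := by
  induction c generalizing L with
  | zero =>
    rw [lowerCentralSeries_zero] at hc
    have hg : g ∈ (⊥ : Subgroup L) := hc ▸ mem_top g
    rw [mem_bot.mp hg]
    exact S.subset_rootSet S.one_mem
  | succ c ih =>
    refine forall_mem_rootSet_of_lowerCentralSeries_succ_eq_bot hc hX hXS (fun g ↦ ?_) g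
    set N := (⊤ : Subgroup L).lowerCentralSeries c
    have hπ := QuotientGroup.mk'_surjective N
    have hcπ : (⊤ : Subgroup (L ⧸ N)).lowerCentralSeries c = ⊥ := by
      rw [← map_top_of_surjective _ hπ, ← map_lowerCentralSeries]
      exact (map_eq_bot_iff _).mpr (QuotientGroup.ker_mk' N).ge
    have hXπ : closure (QuotientGroup.mk' N '' X) = ⊤ := by
      rw [← MonoidHom.map_closure, hX, map_top_of_surjective _ hπ]
    have := ih hcπ hXπ (S := S.map (QuotientGroup.mk' N))
      (by rintro _ ⟨x, hx, rfl⟩; exact map_mem_rootSet_map _ (hXS hx)) (QuotientGroup.mk' N g)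
    rwa [← mem_rootSet_comap, comap_map_eq, QuotientGroup.ker_mk'] at this

theorem closure_subset_rootSet [Group.IsNilpotent G] {X : Set G} (hX : X ⊆ S.rootSet) :
    (closure X : Set G) ⊆ S.rootSet := fun g hg ↦ by
  obtain ⟨c, hc⟩ :=
    nilpotent_iff_lowerCentralSeries.mp (inferInstance : Group.IsNilpotent (closure X))
  exact mem_rootSet_comap.mp <| mem_rootSet_of_closure_eq_top hc closure_closure_coe_preimage
    (S := S.subgroupOf (closure X)) (fun x hx ↦ mem_rootSet_comap.mpr (hX hx)) ⟨g, hg⟩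

theorem coe_closure_rootSet [Group.IsNilpotent G] (H : Subgroup G) :
    (closure H.rootSet : Set G) = H.rootSet :=
  (closure_subset_rootSet subset_rfl).antisymm subset_closure

theorem relIndex_ne_zero_of_le_center (hN : N ≤ center G) (hfg : N.FG)
    (hNH : (N : Set G) ⊆ H.rootSet) : H.relIndex N ≠ 0 := by
  have := (Group.fg_iff_subgroup_fg N).mpr hfg
  let : CommGroup N :=
    { mul_comm := fun a b ↦ Subtype.ext (mem_center_iff.mp (hN b.2) a) }
  have htors : IsMulTorsion (N ⧸ H.subgroupOf N) := by
    rintro ⟨x⟩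
    obtain ⟨r, hr, hxr⟩ := hNH x.2
    exact isOfFinOrder_iff_pow_eq_one.mpr
      ⟨r, hr, (QuotientGroup.eq_one_iff _).mpr (by rwa [mem_subgroupOf, coe_pow])⟩
  have := CommGroup.finite_of_fg_isMulTorsion _ htors
  exact index_ne_zero_of_finite

theorem relIndex_sup_of_le_normalizer (hN : N ≤ normalizer (H : Set G)) :
    H.relIndex (H ⊔ N) = H.relIndex N := by
  have : (H.subgroupOf (H ⊔ N)).Normal :=
    (normal_subgroupOf_iff_le_normalizer le_sup_left).mpr (sup_le le_normalizer hN)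
  rw [← relIndex_subgroupOf (le_refl (H ⊔ N)), ← relIndex_subgroupOf (le_sup_right : N ≤ H ⊔ N),
    ← relIndex_sup_left (K := H.subgroupOf (H ⊔ N)) (H := N.subgroupOf (H ⊔ N)),
    ← subgroupOf_sup le_sup_left le_sup_right]

theorem exists_fg_le_sup_eq [N.Normal] (h : (H ⊔ N).FG) :
    ∃ N₀ ≤ N, N₀.FG ∧ H ⊔ N₀ = H ⊔ N := by
  obtain ⟨T, hT⟩ := h
  have hdecomp : ∀ t ∈ (T : Set G), ∃ y ∈ H, ∃ z ∈ N, y * z = t :=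
    fun t ht ↦ mem_sup_of_normal_right.mp (hT ▸ subset_closure ht)
  choose! y hy z hz hyz using hdecomp
  refine ⟨closure (z '' T), (closure_le _).mpr (Set.image_subset_iff.mpr hz),
    (fg_iff _).mpr ⟨_, rfl, T.finite_toSet.image z⟩, ?_⟩
  refine le_antisymm (sup_le_sup_left ((closure_le _).mpr (Set.image_subset_iff.mpr hz)) H) ?_
  rw [← hT, closure_le]
  intro t ht
  rw [← hyz t ht]
  exact mul_mem_sup (hy t ht) (subset_closure (Set.mem_image_of_mem z ht))

theorem index_ne_zero_of_forall_mem_rootSet [Group.IsNilpotent G] [Group.FG G] (H : Subgroup G)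
    (hH : ∀ g, g ∈ H.rootSet) : H.index ≠ 0 := by
  revert H
  refine Group.nilpotent_center_quotient_ind
    (P := fun G _ _ ↦ ∀ [Group.FG G] (H : Subgroup G), (∀ g, g ∈ H.rootSet) → H.index ≠ 0)
    G (fun _ _ _ _ _ _ ↦ index_ne_zero_of_finite) fun G _ _ ih _ H hH ↦ ?_
  have hπ := QuotientGroup.mk'_surjective (center G)
  have hZ : (H ⊔ center G).index ≠ 0 := by
    have := ih (H.map (QuotientGroup.mk' _)) fun q ↦ by
      obtain ⟨g, rfl⟩ := hπ q
      exact map_mem_rootSet_map _ (hH g)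
    rwa [← index_comap_of_surjective _ hπ, comap_map_eq, QuotientGroup.ker_mk'] at this
  have : (H ⊔ center G).FiniteIndex := ⟨hZ⟩
  obtain ⟨Z₀, hZ₀, hfg, hsup⟩ :=
    exists_fg_le_sup_eq ((Group.fg_iff_subgroup_fg _).mp (fg_of_index_ne_zero (H ⊔ center G)))
  have hHZ : H.relIndex (H ⊔ center G) ≠ 0 := by
    rw [← hsup, relIndex_sup_of_le_normalizer (hZ₀.trans (center_le_normalizer _))]
    exact relIndex_ne_zero_of_le_center hZ₀ hfg fun z _ ↦ hH z
  rw [← relIndex_mul_index le_sup_left]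
  exact mul_ne_zero hHZ hZ

theorem relIndex_ne_zero_of_subset_rootSet [Group.IsNilpotent G] {K : Subgroup G} (hK : K.FG)
    (hKH : (K : Set G) ⊆ H.rootSet) : H.relIndex K ≠ 0 := by
  have := (Group.fg_iff_subgroup_fg K).mpr hK
  exact index_ne_zero_of_forall_mem_rootSet _ fun x ↦ mem_rootSet_comap.mpr (hKH x.2)

theorem le_commensurator (H : Subgroup G) : H ≤ Commensurable.commensurator H := fun _ hg ↦ by
  rw [Commensurable.commensurator_mem_iff]
  exact (conj_smul_eq_self_of_mem hg).symm ▸ Commensurable.refl H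

theorem rootSet_subset_commensurator [Group.IsNilpotent G] (hH : H.FG) :
    H.rootSet ⊆ Commensurable.commensurator H := fun g hg ↦ by
  have hK : ((H ⊔ closure {g} : Subgroup G) : Set G) ⊆ H.rootSet := by
    rw [← coe_closure_rootSet]
    exact SetLike.coe_subset_coe.mpr <| sup_le (H.subset_rootSet.trans subset_closure)
      (closure_mono (Set.singleton_subset_iff.mpr hg))
  have hHK : Commensurable H (H ⊔ closure {g}) :=
    ⟨relIndex_ne_zero_of_subset_rootSet (hH.sup ⟨{g}, by simp⟩) hK,
      by rw [relIndex_eq_one.mpr le_sup_left]; exact one_ne_zero⟩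
  rw [hHK.eq]
  exact le_commensurator _ (mem_sup_right (subset_closure rfl))

end Subgroup

/-- For a finitely generated subgroup `H` of a nilpotent group `G`, the set of roots
`√H = {g : ∃ r ≥ 1, g ^ r ∈ H}` is a subgroup, `H` has finite index in every finitely
generated subgroup of `√H` containing `H`, and every element of `√H` commensurates `H`
(Corollary `cor:finite-ext`). -/
theorem stmt_14 {G : Type*} [Group G] [Group.IsNilpotent G]
    (H : Subgroup G) (hH : H.FG) :
    (∃ K : Subgroup G, (K : Set G) = {g : G | ∃ r : ℕ, 1 ≤ r ∧ g ^ r ∈ H}) ∧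
    (∀ K : Subgroup G, K.FG → H ≤ K →
      (K : Set G) ⊆ {g : G | ∃ r : ℕ, 1 ≤ r ∧ g ^ r ∈ H} → H.relIndex K ≠ 0) ∧
    (∀ g : G, (∃ r : ℕ, 1 ≤ r ∧ g ^ r ∈ H) →
      Subgroup.Commensurable H (Subgroup.map (MulAut.conj g).toMonoidHom H)) :=
  -- `ConjAct.toConjAct g • H`, used by `commensurator`, is by definition this image of `H`.
  ⟨⟨_, H.coe_closure_rootSet⟩,
    fun _ hK _ hKH ↦ Subgroup.relIndex_ne_zero_of_subset_rootSet hK hKH,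
    fun _ hg ↦ (Subgroup.rootSet_subset_commensurator hH hg).symm⟩
end

section
/- Let G be a finitely generated nilpotent group and V ≤ G a subgroup. Then there are at most finitely many finite index surgroups of V generated by V and one element; that is, the set of subgroups H of G such that H is generated by V∪{c} for some c∈G and V has finite index in H is finite. -/
/-!
Call `g` a root of `V` if some positive power of `g` lies in `V`; the roots form the isolator
of `V`. If `V` has finite index in `⟨V, c⟩`, then `c` is a root of `V`, so all these subgroups lie
between `V` and the subgroup generated by the isolator. In a finitely generated nilpotent group
the isolator is itself a subgroup and contains `V` with finite index, so only finitely many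
subgroups lie in between.

Both facts, that the isolator is closed under products and that it contains `V` with finite
index, are proved by induction on the nilpotency class, passing to the quotient by the last
nontrivial term `γ c` of the lower central series. That term is central and generated by the
left-normed commutators of weight `c + 1` in any generating set. By bilinearity these commutators
are roots of `V` when the generators are, and when `G` is finitely generated, `γ c` is a finitely
generated abelian group, in which the roots of `V` form a finite extension of `V ⊓ γ c`.
-/

open scoped commutatorElement

section Commutators

variable {G : Type*} [Group G]

theorem commutatorElement_pow_left_of_commute {a b : G} (h : Commute a ⁅a, b⁆) (k : ℕ) :
    ⁅a ^ k, b⁆ = ⁅a, b⁆ ^ k := by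
  induction k with
  | zero => simp
  | succ k ih =>
    rw [pow_succ', commutatorElement_mul_left_eq_conj_mul, ih, (h.pow_right k).mul_inv_cancel,
      pow_succ]

theorem commutatorElement_pow_right_of_commute {a b : G} (h : Commute b ⁅a, b⁆) (k : ℕ) :
    ⁅a, b ^ k⁆ = ⁅a, b⁆ ^ k := by
  induction k with
  | zero => simp
  | succ k ih =>
    rw [pow_succ', commutatorElement_mul_right_eq_mul_conj, ih, mul_assoc _ b, mul_assoc,
      (h.pow_right k).mul_inv_cancel, pow_succ']

end Commutators

namespace Subgroup

variable {G : Type*} [Group G]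

theorem commutatorElement_mem {H : Subgroup G} {a b : G} (ha : a ∈ H) (hb : b ∈ H) :
    ⁅a, b⁆ ∈ H := by
  rw [commutatorElement_def]
  exact mul_mem (mul_mem (mul_mem ha hb) (inv_mem ha)) (inv_mem hb)

/-- Bilinearity of central commutators gives `⁅d, s⁆ ^ (t * m) = ⁅h, s ^ m⁆`. -/
theorem commutatorElement_pow_mem {H : Subgroup G} {d s h w : G} {t m : ℕ}
    (hds : ⁅d, s⁆ ∈ center G) (hw : w ∈ center G) (hdt : d ^ t = h * w) (hh : h ∈ H)
    (hs : s ^ m ∈ H) : ⁅d, s⁆ ^ (t * m) ∈ H := by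
  have hpow : ⁅d, s⁆ ^ t = ⁅h, s⁆ := by
    rw [← commutatorElement_pow_left_of_commute (mem_center_iff.mp hds d), hdt,
      commutatorElement_mul_left_eq_conj_mul,
      commutatorElement_eq_one_iff_commute.mpr (mem_center_iff.mp hw s).symm, mul_one,
      mul_inv_cancel, one_mul]
  have hcen : ⁅h, s⁆ ∈ center G := hpow ▸ pow_mem hds t
  rw [pow_mul, hpow, ← commutatorElement_pow_right_of_commute (mem_center_iff.mp hcen s)]
  exact commutatorElement_mem hh hs

def leftNormedCommutators (S : Set G) : ℕ → Set G
  | 0 => S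
  | n + 1 => Set.image2 (fun a b => ⁅a, b⁆) (leftNormedCommutators S n) S

theorem leftNormedCommutators_subset_lowerCentralSeries (S : Set G) :
    ∀ n, leftNormedCommutators S n ⊆ lowerCentralSeries (⊤ : Subgroup G) n
  | 0 => fun g _ => mem_top g
  | n + 1 => by
    rintro _ ⟨d, hd, s, -, rfl⟩
    exact commutator_mem_commutator (leftNormedCommutators_subset_lowerCentralSeries S n hd)
      (mem_top s)

theorem finite_leftNormedCommutators {S : Set G} (hS : S.Finite) :
    ∀ n, (leftNormedCommutators S n).Finite
  | 0 => hS
  | n + 1 => (finite_leftNormedCommutators hS n).image2 _ hS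

theorem image_leftNormedCommutators {G' : Type*} [Group G'] (f : G →* G') (S : Set G) :
    ∀ n, f '' leftNormedCommutators S n = leftNormedCommutators (f '' S) n
  | 0 => rfl
  | n + 1 => by
    rw [leftNormedCommutators, Set.image_image2_distrib (map_commutatorElement f),
      image_leftNormedCommutators f S n, leftNormedCommutators]

theorem mem_upperCentralSeriesStep_of_closure_eq_top {N : Subgroup G} [N.Normal] {S : Set G}
    (hS : closure S = ⊤) {x : G} (hx : ∀ s ∈ S, ⁅x, s⁆ ∈ N) : x ∈ upperCentralSeriesStep N := by
  rw [upperCentralSeriesStep_eq_comap_center, mem_comap, ← centralizer_univ, ← coe_top,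
    ← map_top_of_surjective _ (QuotientGroup.mk'_surjective N), ← hS, MonoidHom.map_closure,
    centralizer_closure]
  rintro _ ⟨s, hs, rfl⟩
  have hcomm : ⁅QuotientGroup.mk' N x, QuotientGroup.mk' N s⁆ = 1 := by
    rw [← map_commutatorElement, QuotientGroup.mk'_apply, QuotientGroup.eq_one_iff]
    exact hx s hs
  exact (commutatorElement_eq_one_iff_mul_comm.mp hcomm).symm

theorem closure_leftNormedCommutators_sup_le (S : Set G) (n : ℕ) :
    closure (leftNormedCommutators S n) ⊔ lowerCentralSeries ⊤ (n + 1) ≤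
      lowerCentralSeries (⊤ : Subgroup G) n :=
  sup_le ((closure_le _).mpr (leftNormedCommutators_subset_lowerCentralSeries S n))
    (lowerCentralSeries_antitone _ n.le_succ)

theorem lowerCentralSeries_eq_closure_sup {S : Set G} (hS : closure S = ⊤) (n : ℕ) :
    lowerCentralSeries (⊤ : Subgroup G) n =
      closure (leftNormedCommutators S n) ⊔ lowerCentralSeries ⊤ (n + 1) := by
  refine le_antisymm ?_ (closure_leftNormedCommutators_sup_le S n)
  induction n with
  | zero =>
    rw [lowerCentralSeries_zero]
    exact hS.ge.trans le_sup_left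
  | succ n ih =>
    set N := closure (leftNormedCommutators S (n + 1)) ⊔ lowerCentralSeries ⊤ (n + 2)
    -- `N` is normal since it contains `⁅N, ⊤⁆`; it suffices that `γ n` is central modulo `N`.
    have : N.Normal := commutator_top_right_le_iff.mp
      ((commutator_mono (closure_leftNormedCommutators_sup_le S (n + 1)) le_rfl).trans
        le_sup_right)
    rw [lowerCentralSeries_succ, commutator_le]
    intro a ha g _
    suffices lowerCentralSeries ⊤ n ≤ upperCentralSeriesStep N from this ha g
    refine ih.trans (sup_le ((closure_le _).mpr fun d hd => ?_) fun a ha g => ?_)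
    · exact mem_upperCentralSeriesStep_of_closure_eq_top hS fun s hs =>
        le_sup_left (a := closure _) (subset_closure ⟨d, hd, s, hs, rfl⟩)
    · exact le_sup_right (a := closure _) (commutator_mem_commutator ha (mem_top g))

theorem le_center_of_lowerCentralSeries_succ_eq_bot {n : ℕ}
    (h : lowerCentralSeries (⊤ : Subgroup G) (n + 1) = ⊥) :
    lowerCentralSeries ⊤ n ≤ center G :=
  commutator_top_right_eq_bot_iff_le_center.mp h

theorem lowerCentralSeries_quotient_lowerCentralSeries (n : ℕ) :
    lowerCentralSeries (⊤ : Subgroup (G ⧸ lowerCentralSeries (⊤ : Subgroup G) n)) n = ⊥ := by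
  rw [← map_top_of_surjective _ (QuotientGroup.mk'_surjective _), ← map_lowerCentralSeries,
    map_eq_bot_iff, QuotientGroup.ker_mk']

theorem lowerCentralSeries_eq_closure {S : Set G} (hS : closure S = ⊤) {n : ℕ}
    (h : lowerCentralSeries (⊤ : Subgroup G) (n + 1) = ⊥) :
    lowerCentralSeries (⊤ : Subgroup G) n = closure (leftNormedCommutators S n) := by
  rw [lowerCentralSeries_eq_closure_sup hS, h, sup_bot_eq]

theorem lowerCentralSeries_fg [Group.FG G] {n : ℕ}
    (h : lowerCentralSeries (⊤ : Subgroup G) (n + 1) = ⊥) :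
    (lowerCentralSeries (⊤ : Subgroup G) n).FG := by
  obtain ⟨S, hS, hfin⟩ := Group.fg_iff.mp ‹_›
  exact (fg_iff _).mpr
    ⟨_, (lowerCentralSeries_eq_closure hS h).symm, finite_leftNormedCommutators hfin n⟩

theorem exists_mul_eq_of_mk_mem_map {N : Subgroup G} [N.Normal] {H : Subgroup G} {x : G}
    (hx : QuotientGroup.mk' N x ∈ H.map (QuotientGroup.mk' N)) : ∃ h ∈ H, ∃ a ∈ N, h * a = x := by
  rw [← mem_comap, comap_map_eq, QuotientGroup.ker_mk', ← SetLike.mem_coe, mul_normal] at hx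
  exact hx

def isolator (H : Subgroup G) : Set G := {g | ∃ n, 0 < n ∧ g ^ n ∈ H}

theorem subset_isolator (H : Subgroup G) : (H : Set G) ⊆ H.isolator :=
  fun g hg => ⟨1, one_pos, by rwa [pow_one]⟩

theorem image_subset_isolator_map {G' : Type*} [Group G'] (f : G →* G') {H : Subgroup G}
    {S : Set G} (h : S ⊆ H.isolator) : f '' S ⊆ (H.map f).isolator := by
  rintro _ ⟨g, hg, rfl⟩
  obtain ⟨n, hn, hgn⟩ := h hg
  exact ⟨n, hn, map_pow f g n ▸ mem_map_of_mem f hgn⟩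

theorem mem_isolator_comap {G' : Type*} [Group G'] (f : G' →* G) {H : Subgroup G} {x : G'} :
    x ∈ (H.comap f).isolator ↔ f x ∈ H.isolator := by
  simp only [isolator, Set.mem_ofPred_eq, mem_comap, map_pow]

theorem mem_isolator_of_pow_mem_isolator {H : Subgroup G} {g : G} {k : ℕ} (hk : 0 < k)
    (hg : g ^ k ∈ H.isolator) : g ∈ H.isolator := by
  obtain ⟨n, hn, hgn⟩ := hg
  exact ⟨k * n, Nat.mul_pos hk hn, by rwa [pow_mul]⟩

theorem mul_mem_isolator_of_commute {H : Subgroup G} {x y : G} (hxy : Commute x y)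
    (hx : x ∈ H.isolator) (hy : y ∈ H.isolator) : x * y ∈ H.isolator := by
  obtain ⟨m, hm, hxm⟩ := hx
  obtain ⟨n, hn, hyn⟩ := hy
  refine ⟨m * n, Nat.mul_pos hm hn, ?_⟩
  rw [hxy.mul_pow, pow_mul, mul_comm m, pow_mul]
  exact mul_mem (pow_mem hxm n) (pow_mem hyn m)

theorem closure_subset_isolator_of_le_center {H : Subgroup G} {S : Set G}
    (hS : closure S ≤ center G) (h : S ⊆ H.isolator) : (closure S : Set G) ⊆ H.isolator := by
  intro g hg
  induction hg using closure_induction with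
  | mem s hs => exact h hs
  | one => exact subset_isolator H (one_mem H)
  | mul x y _ hy ihx ihy => exact mul_mem_isolator_of_commute (mem_center_iff.mp (hS hy) x) ihx ihy
  | inv x _ ih =>
    obtain ⟨n, hn, hxn⟩ := ih
    exact ⟨n, hn, by rw [inv_pow]; exact inv_mem hxn⟩

theorem leftNormedCommutators_subset_isolator {H : Subgroup G} {S : Set G}
    (hSH : S ⊆ H.isolator) {n : ℕ} (hn : lowerCentralSeries (⊤ : Subgroup G) (n + 1) = ⊥) :
    leftNormedCommutators S n ⊆ H.isolator := by
  induction n generalizing G with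
  | zero => exact hSH
  | succ n ih =>
    rintro _ ⟨d, hd, s, hs, rfl⟩
    set π := QuotientGroup.mk' (lowerCentralSeries (⊤ : Subgroup G) (n + 1))
    have hπd : π d ∈ (H.map π).isolator := by
      refine ih (image_subset_isolator_map π hSH)
        (lowerCentralSeries_quotient_lowerCentralSeries (n + 1)) ?_
      rw [← image_leftNormedCommutators]
      exact Set.mem_image_of_mem π hd
    obtain ⟨t, ht, hdt⟩ := hπd
    obtain ⟨h, hh, w, hw, hhw⟩ := exists_mul_eq_of_mk_mem_map (map_pow π d t ▸ hdt)
    obtain ⟨m, hm, hsm⟩ := hSH hs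
    have hcen := le_center_of_lowerCentralSeries_succ_eq_bot hn
    exact ⟨t * m, Nat.mul_pos ht hm, commutatorElement_pow_mem
      (hcen (commutator_mem_commutator (leftNormedCommutators_subset_lowerCentralSeries S n hd)
        (mem_top s))) (hcen hw) hhw.symm hh hsm⟩

theorem isolator_eq_univ_of_lowerCentralSeries_eq_bot {H : Subgroup G} {S : Set G}
    (hS : closure S = ⊤) (hSH : S ⊆ H.isolator) {c : ℕ}
    (hc : lowerCentralSeries (⊤ : Subgroup G) c = ⊥) : H.isolator = Set.univ := by
  refine Set.eq_univ_of_forall fun g => ?_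
  induction c generalizing G with
  | zero =>
    rw [mem_bot.mp (hc ▸ mem_top g : g ∈ (⊥ : Subgroup G))]
    exact subset_isolator H (one_mem H)
  | succ c ih =>
    have hA := lowerCentralSeries_eq_closure hS hc
    have hAc := le_center_of_lowerCentralSeries_succ_eq_bot hc
    set π := QuotientGroup.mk' (lowerCentralSeries (⊤ : Subgroup G) c)
    have hπS : closure (π '' S) = ⊤ := by
      rw [← MonoidHom.map_closure, hS, map_top_of_surjective _ (QuotientGroup.mk'_surjective _)]
    obtain ⟨k, hk, hgk⟩ := ih hπS (image_subset_isolator_map π hSH)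
      (lowerCentralSeries_quotient_lowerCentralSeries c) (π g)
    obtain ⟨h, hh, a, ha, hha⟩ := exists_mul_eq_of_mk_mem_map (map_pow π g k ▸ hgk)
    have haH : a ∈ H.isolator := by
      rw [hA] at ha hAc
      exact closure_subset_isolator_of_le_center hAc
        (leftNormedCommutators_subset_isolator hSH hc) ha
    refine mem_isolator_of_pow_mem_isolator hk (hha ▸ ?_)
    exact mul_mem_isolator_of_commute (mem_center_iff.mp (hAc ha) h) (subset_isolator H hh) haH

theorem closure_subset_isolator [Group.IsNilpotent G] {H : Subgroup G} {S : Set G}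
    (hSH : S ⊆ H.isolator) : (closure S : Set G) ⊆ H.isolator := by
  obtain ⟨c, hc⟩ := nilpotent_iff_lowerCentralSeries.mp (isNilpotent (closure S))
  have hS'H : (closure S).subtype ⁻¹' S ⊆ (H.comap (closure S).subtype).isolator :=
    fun _ hs => (mem_isolator_comap _).mpr (hSH hs)
  have := isolator_eq_univ_of_lowerCentralSeries_eq_bot closure_closure_coe_preimage hS'H hc
  exact fun g hg => (mem_isolator_comap _).mp (this ▸ Set.mem_univ (⟨g, hg⟩ : closure S))

theorem fg_of_commGroup {B : Type*} [CommGroup B] [Group.FG B] (U : Subgroup B) : U.FG := by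
  have : Module.Finite ℤ (Additive B) := Module.Finite.iff_addGroup_fg.mpr inferInstance
  have : IsNoetherian ℤ (Additive B) := isNoetherian_of_isNoetherianRing_of_finite ℤ _
  have := IsNoetherian.noetherian (AddSubgroup.toIntSubmodule U.toAddSubgroup)
  rwa [Submodule.fg_iff_addSubgroup_fg, AddSubgroup.toIntSubmodule_toAddSubgroup,
    ← fg_iff_add_fg] at this

theorem relIndex_ne_zero_of_commGroup {B : Type*} [CommGroup B] [Group.FG B] {V U : Subgroup B}
    (hU : (U : Set B) ⊆ V.isolator) : V.relIndex U ≠ 0 := by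
  have : Group.FG U := (Group.fg_iff_subgroup_fg U).mpr (fg_of_commGroup U)
  have htors : IsMulTorsion (U ⧸ V.subgroupOf U) := by
    refine fun q => QuotientGroup.induction_on q fun u => ?_
    obtain ⟨n, hn, hun⟩ := hU u.2
    refine isOfFinOrder_iff_pow_eq_one.mpr ⟨n, hn, ?_⟩
    rwa [← QuotientGroup.mk_pow, QuotientGroup.eq_one_iff, mem_subgroupOf, coe_pow]
  have := CommGroup.finite_of_fg_isMulTorsion _ htors
  exact index_ne_zero_of_finite

theorem relIndex_sup_right_of_le_normalizer {H K : Subgroup G} (h : H ≤ normalizer (K : Set G)) :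
    K.relIndex (H ⊔ K) = K.relIndex H := by
  rw [← relIndex_subgroupOf (sup_le h le_normalizer), subgroupOf_sup h le_normalizer,
    relIndex_sup_right, relIndex_subgroupOf h]

open scoped IsMulCommutative in
theorem relIndex_ne_zero_of_le_sup_center {V W A : Subgroup G} (hA : A ≤ center G)
    (hAfg : A.FG) (hW : W ≤ V ⊔ A) (hWV : (W : Set G) ⊆ V.isolator) : V.relIndex W ≠ 0 := by
  have : IsMulCommutative A :=
    le_centralizer_iff_isMulCommutative.mp (hA.trans (center_le_centralizer _))
  have : Group.FG A := (Group.fg_iff_subgroup_fg A).mpr hAfg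
  have : A.Normal := ⟨fun a ha g => by rwa [mem_center_iff.mp (hA ha) g, mul_inv_cancel_right]⟩
  set V' := V.comap A.subtype
  set T := closure V'.isolator
  have hT : V.relIndex (T.map A.subtype) ≠ 0 := by
    rw [← relIndex_comap]
    exact relIndex_ne_zero_of_commGroup (closure_subset_isolator subset_rfl)
  have hWT : W ≤ T.map A.subtype ⊔ V := by
    intro w hw
    have hw' : w ∈ (↑(V ⊔ A) : Set G) := hW hw
    rw [mul_normal] at hw'
    obtain ⟨v, hv, a, ha, rfl⟩ := hw'
    have haV : a ∈ V.isolator := by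
      obtain ⟨n, hn, hvan⟩ := hWV hw
      refine ⟨n, hn, ?_⟩
      rw [Commute.mul_pow (mem_center_iff.mp (hA ha) v)] at hvan
      simpa using mul_mem (inv_mem (pow_mem hv n)) hvan
    exact mul_mem (mem_sup_right hv)
      (mem_sup_left ⟨⟨a, ha⟩, subset_closure ((mem_isolator_comap _).mpr haV), rfl⟩)
  refine fun h0 => hT ?_
  rw [← relIndex_sup_right_of_le_normalizer
    ((map_subtype_le T).trans (hA.trans (center_le_normalizer _)))]
  exact relIndex_eq_zero_of_le_right hWT h0

theorem relIndex_ne_zero_of_lowerCentralSeries_eq_bot [Group.FG G] {c : ℕ}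
    (hc : lowerCentralSeries (⊤ : Subgroup G) c = ⊥) {V U : Subgroup G}
    (hU : (U : Set G) ⊆ V.isolator) : V.relIndex U ≠ 0 := by
  induction c generalizing G with
  | zero =>
    rw [relIndex_eq_one.mpr ((le_top.trans_eq hc).trans bot_le)]
    exact one_ne_zero
  | succ c ih =>
    have hAc := le_center_of_lowerCentralSeries_succ_eq_bot hc
    set A := lowerCentralSeries (⊤ : Subgroup G) c
    set π := QuotientGroup.mk' A
    have h₁ : (V ⊔ A).relIndex U ≠ 0 := by
      have := ih (lowerCentralSeries_quotient_lowerCentralSeries c) (V := V.map π) (U := U.map π)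
        (by rw [coe_map]; exact image_subset_isolator_map π hU)
      rw [relIndex_map_map, QuotientGroup.ker_mk'] at this
      exact fun h0 => this (relIndex_eq_zero_of_le_right le_sup_left h0)
    have h₂ : V.relIndex ((V ⊔ A) ⊓ U) ≠ 0 :=
      relIndex_ne_zero_of_le_sup_center hAc (lowerCentralSeries_fg hc) inf_le_left
        fun u hu => hU hu.2
    have := relIndex_inf_mul_relIndex V (V ⊔ A) U
    rw [inf_of_le_left (le_sup_left : V ≤ V ⊔ A)] at this
    exact this ▸ mul_ne_zero h₂ h₁

theorem relIndex_ne_zero_of_subset_isolator [Group.IsNilpotent G] [Group.FG G]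
    {V U : Subgroup G} (hU : (U : Set G) ⊆ V.isolator) : V.relIndex U ≠ 0 :=
  let ⟨_, hc⟩ := nilpotent_iff_lowerCentralSeries.mp ‹_›
  relIndex_ne_zero_of_lowerCentralSeries_eq_bot hc hU

theorem finite_Icc_of_relIndex_ne_zero {V I : Subgroup G} (h : V.relIndex I ≠ 0) :
    (Set.Icc V I).Finite := by
  have : Finite (I ⧸ V.subgroupOf I) := index_ne_zero_iff_finite.mp h
  let f : Subgroup G → Set (I ⧸ V.subgroupOf I) :=
    fun H => QuotientGroup.mk '' (H.subgroupOf I : Set I)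
  have hle : ∀ H₁ ∈ Set.Icc V I, ∀ H₂ ∈ Set.Icc V I, f H₁ ⊆ f H₂ → H₁ ≤ H₂ := by
    rintro H₁ ⟨-, h₁I⟩ H₂ ⟨hV₂, -⟩ hf x hx
    obtain ⟨u, hu, hux⟩ := hf ⟨⟨x, h₁I hx⟩, hx, rfl⟩
    rw [QuotientGroup.eq, mem_subgroupOf, coe_mul, coe_inv] at hux
    simpa using mul_mem (mem_subgroupOf.mp hu) (hV₂ hux)
  exact Set.Finite.of_finite_image (Set.toFinite (f '' Set.Icc V I))
    fun H₁ h₁ H₂ h₂ hf => le_antisymm (hle H₁ h₁ H₂ h₂ hf.le) (hle H₂ h₂ H₁ h₁ hf.ge)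

end Subgroup

/-- In a finitely generated nilpotent group, a subgroup `V` admits at most finitely many
finite index surgroups of the form `⟨V, c⟩` (Corollary `cor:fin-ext`). -/
theorem stmt_15 {G : Type*} [Group G] [Group.IsNilpotent G] [Group.FG G]
    (V : Subgroup G) :
    {H : Subgroup G | (∃ c : G, H = Subgroup.closure ((V : Set G) ∪ {c})) ∧
      V.relIndex H ≠ 0}.Finite := by
  have hV : V.relIndex (Subgroup.closure V.isolator) ≠ 0 :=
    Subgroup.relIndex_ne_zero_of_subset_isolator (Subgroup.closure_subset_isolator subset_rfl)
  refine (Subgroup.finite_Icc_of_relIndex_ne_zero hV).subset ?_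
  rintro _ ⟨⟨c, rfl⟩, hc⟩
  obtain ⟨n, hn, -, hcn⟩ := Subgroup.exists_pow_mem_of_relIndex_ne_zero hc
    (Subgroup.subset_closure (Or.inr rfl))
  refine ⟨fun v hv => Subgroup.subset_closure (Or.inl hv), Subgroup.closure_mono ?_⟩
  exact Set.union_subset V.subset_isolator (Set.singleton_subset_iff.mpr ⟨n, hn, hcn.1⟩)
end

section
/- Let G be a group and (G_i)_{i∈ℕ} a prefiltration on G. For each i∈ℕ set G_i^□ := {(g_0,g_1)∈G_i×G_i : g_0⁻¹g_1∈G_{i+1}}. Then each G_i^□ is a subgroup of G×G, the chain is descending (G_0^□ ⊇ G_1^□ ⊇ ⋯), and ⁅G_i^□, G_j^□⁆ ⊆ G_{i+j}^□ for all i,j∈ℕ; that is, (G_i^□)_{i∈ℕ} is a prefiltration on G×G. -/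
/-!
Write the elements of `G_i^□` as `(g, g x)` with `g ∈ G_i` and `x ∈ G_{i+1}`. Every `G_m` is
normalised by every `G_k`, since `g⁻¹ x g = x ⁅x, g⁆` and `⁅x, g⁆ ∈ G_{m+k} ⊆ G_m`; this makes
`G_i^□` a subgroup. For commutators, the expansions `⁅a x, b⁆ = x⁻¹ ⁅a, b⁆ x ⁅x, b⁆` and
`⁅a, b y⁆ = ⁅a, y⁆ y⁻¹ ⁅a, b⁆ y` show that replacing `a ∈ G_i` by `a x` with `x ∈ G_{i+1}`, or
`b ∈ G_j` by `b y` with `y ∈ G_{j+1}`, changes `⁅a, b⁆` only by a factor in `G_{i+j+1}`.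
-/

structure IsPrefiltration {G : Type*} [Group G] (Gs : ℕ → Subgroup G) : Prop where
  antitone : Antitone Gs
  comm_mem {i j : ℕ} {a b : G} : a ∈ Gs i → b ∈ Gs j → a⁻¹ * b⁻¹ * a * b ∈ Gs (i + j)

namespace IsPrefiltration

variable {G : Type*} [Group G] {Gs : ℕ → Subgroup G}

theorem comm_mem_of_le (hG : IsPrefiltration Gs) {i j n : ℕ} (hn : n ≤ i + j) {a b : G}
    (ha : a ∈ Gs i) (hb : b ∈ Gs j) : a⁻¹ * b⁻¹ * a * b ∈ Gs n :=
  hG.antitone hn (hG.comm_mem ha hb)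

theorem conj_mem (hG : IsPrefiltration Gs) {k m : ℕ} {g x : G} (hg : g ∈ Gs k)
    (hx : x ∈ Gs m) : g⁻¹ * x * g ∈ Gs m := by
  have h : g⁻¹ * x * g = x * (x⁻¹ * g⁻¹ * x * g) := by group
  exact h ▸ mul_mem hx (hG.comm_mem_of_le (Nat.le_add_right m k) hx hg)

theorem inv_comm_mul_comm_mem_of_right (hG : IsPrefiltration Gs) {i j : ℕ} {a b b' : G}
    (ha : a ∈ Gs i) (hb : b ∈ Gs j) (hb' : b⁻¹ * b' ∈ Gs (j + 1)) :
    (a⁻¹ * b⁻¹ * a * b)⁻¹ * (a⁻¹ * b'⁻¹ * a * b') ∈ Gs (i + j + 1) := by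
  obtain ⟨y, hy, rfl⟩ : ∃ y ∈ Gs (j + 1), b' = b * y := ⟨_, hb', by group⟩
  set c := a⁻¹ * b⁻¹ * a * b
  have hc : c ∈ Gs (i + j) := hG.comm_mem ha hb
  have h : c⁻¹ * (a⁻¹ * (b * y)⁻¹ * a * (b * y)) =
      c⁻¹ * (a⁻¹ * y⁻¹ * a * y) * c * (c⁻¹ * y⁻¹ * c * y) := by
    simp only [c]; group
  rw [h]
  exact mul_mem (hG.conj_mem hc (hG.comm_mem_of_le (by omega) ha hy))
    (hG.comm_mem_of_le (by omega) hc hy)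

theorem inv_comm_mul_comm_mem_of_left (hG : IsPrefiltration Gs) {i j : ℕ} {a a' b : G}
    (ha : a ∈ Gs i) (ha' : a⁻¹ * a' ∈ Gs (i + 1)) (hb : b ∈ Gs j) :
    (a⁻¹ * b⁻¹ * a * b)⁻¹ * (a'⁻¹ * b⁻¹ * a' * b) ∈ Gs (i + j + 1) := by
  obtain ⟨x, hx, rfl⟩ : ∃ x ∈ Gs (i + 1), a' = a * x := ⟨_, ha', by group⟩
  set c := a⁻¹ * b⁻¹ * a * b
  have hc : c ∈ Gs (i + j) := hG.comm_mem ha hb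
  have h : c⁻¹ * ((a * x)⁻¹ * b⁻¹ * (a * x) * b) = c⁻¹ * x⁻¹ * c * x * (x⁻¹ * b⁻¹ * x * b) := by
    simp only [c]; group
  rw [h]
  exact mul_mem (hG.comm_mem_of_le (by omega) hc hx) (hG.comm_mem_of_le (by omega) hx hb)

def cube (hG : IsPrefiltration Gs) (i : ℕ) : Subgroup (G × G) where
  carrier := {p | p.1 ∈ Gs i ∧ p.2 ∈ Gs i ∧ p.1⁻¹ * p.2 ∈ Gs (i + 1)}
  one_mem' := ⟨one_mem _, one_mem _, by simp⟩
  mul_mem' := by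
    rintro ⟨a₀, a₁⟩ ⟨b₀, b₁⟩ ⟨ha₀, ha₁, ha⟩ ⟨hb₀, hb₁, hb⟩
    refine ⟨mul_mem ha₀ hb₀, mul_mem ha₁ hb₁, ?_⟩
    have h : (a₀ * b₀)⁻¹ * (a₁ * b₁) = b₀⁻¹ * (a₀⁻¹ * a₁) * b₀ * (b₀⁻¹ * b₁) := by group
    exact h ▸ mul_mem (hG.conj_mem hb₀ ha) hb
  inv_mem' := by
    rintro ⟨a₀, a₁⟩ ⟨ha₀, ha₁, ha⟩
    refine ⟨inv_mem ha₀, inv_mem ha₁, ?_⟩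
    have h : a₀⁻¹⁻¹ * a₁⁻¹ = a₀⁻¹⁻¹ * (a₀⁻¹ * a₁)⁻¹ * a₀⁻¹ := by group
    exact h ▸ hG.conj_mem (inv_mem ha₀) (inv_mem ha)

theorem cube_isPrefiltration (hG : IsPrefiltration Gs) : IsPrefiltration hG.cube where
  antitone i j hij _ := fun ⟨h₀, h₁, h⟩ =>
    ⟨hG.antitone hij h₀, hG.antitone hij h₁, hG.antitone (by omega) h⟩
  comm_mem := by
    rintro i j ⟨a₀, a₁⟩ ⟨b₀, b₁⟩ ⟨ha₀, ha₁, ha⟩ ⟨hb₀, hb₁, hb⟩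
    refine ⟨hG.comm_mem ha₀ hb₀, hG.comm_mem ha₁ hb₁, ?_⟩
    have h : (a₀⁻¹ * b₀⁻¹ * a₀ * b₀)⁻¹ * (a₁⁻¹ * b₁⁻¹ * a₁ * b₁) =
        (a₀⁻¹ * b₀⁻¹ * a₀ * b₀)⁻¹ * (a₀⁻¹ * b₁⁻¹ * a₀ * b₁) *
          ((a₀⁻¹ * b₁⁻¹ * a₀ * b₁)⁻¹ * (a₁⁻¹ * b₁⁻¹ * a₁ * b₁)) := by
      group
    exact h ▸ mul_mem (hG.inv_comm_mul_comm_mem_of_right ha₀ hb₀ hb)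
      (hG.inv_comm_mul_comm_mem_of_left ha₀ ha hb₁)

end IsPrefiltration

/-- **The cube construction preserves prefiltrations**: given a prefiltration `(G_i)` on `G`,
the sets `G_i^□ = {(g₀,g₁) ∈ G_i × G_i : g₀⁻¹ g₁ ∈ G_{i+1}}` form a prefiltration on `G × G`. -/
theorem stmt_16 {G : Type*} [Group G] (Gs : ℕ → Subgroup G)
    (hanti : ∀ i j : ℕ, i ≤ j → Gs j ≤ Gs i)
    (hcomm : ∀ i j : ℕ, ∀ a ∈ Gs i, ∀ b ∈ Gs j, a⁻¹ * b⁻¹ * a * b ∈ Gs (i + j)) :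
    ∃ Q : ℕ → Subgroup (G × G),
      (∀ i, (Q i : Set (G × G)) =
        {p : G × G | p.1 ∈ Gs i ∧ p.2 ∈ Gs i ∧ p.1⁻¹ * p.2 ∈ Gs (i + 1)}) ∧
      (∀ i j : ℕ, i ≤ j → Q j ≤ Q i) ∧
      (∀ i j : ℕ, ∀ a ∈ Q i, ∀ b ∈ Q j, a⁻¹ * b⁻¹ * a * b ∈ Q (i + j)) := by
  have hG : IsPrefiltration Gs := ⟨fun i j => hanti i j, fun ha hb => hcomm _ _ _ ha _ hb⟩
  have hQ := hG.cube_isPrefiltration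
  exact ⟨hG.cube, fun _ => rfl, fun _ _ hij => hQ.antitone hij,
    fun _ _ _ ha _ hb => hQ.comm_mem ha hb⟩
end

section
/- Let K be a compact second countable Hausdorff abelian topological group with normalized Haar measure, acting measurably on a probability space (X,μ) such that x↦k·x preserves μ for every k∈K. Let p∈[2,∞) and F∈L^p(X,μ). For each continuous character χ of K (i.e., each continuous homomorphism χ: K→𝕋 into the circle group) define F_χ∈L^p(X,μ) by F_χ(x) := ∫_K F(k·x)·conj(χ(k)) dk. Then Σ_χ ‖F_χ‖_{L^p(X,μ)}^p ≤ ‖F‖_{L^p(X,μ)}^p, where the sum runs over all continuous characters of K. -/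
/-!
For almost every `x`, the function `k ↦ F (k • x)` lies in `L^p(ν) ⊆ L²(ν)`, and `F_χ x` is its
inner product with `χ`. Distinct characters are orthonormal in `L²(ν)` (the integral of a
nontrivial character vanishes by invariance of `ν`), so Bessel's inequality and `ℓ² ⊆ ℓ^p` give
`∑_χ |F_χ x|^p ≤ (∑_χ |F_χ x|²)^(p/2) ≤ ‖F (· • x)‖_{L²}^p ≤ ‖F (· • x)‖_{L^p}^p`.
Integrating over `x`, Tonelli and the invariance of `μ` turn the right-hand side into `‖F‖_p^p`.
-/

open MeasureTheory
open scoped ENNReal ComplexConjugate InnerProductSpace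

theorem ENNReal.sum_rpow_le_rpow_sum {ι : Type*} (s : Finset ι) (a : ι → ℝ≥0∞) {q : ℝ}
    (hq : 1 ≤ q) : ∑ i ∈ s, a i ^ q ≤ (∑ i ∈ s, a i) ^ q := by
  induction s using Finset.cons_induction with
  | empty => simp [ENNReal.zero_rpow_of_pos (zero_lt_one.trans_le hq)]
  | cons i s _ ih =>
    rw [Finset.sum_cons, Finset.sum_cons]
    exact (add_le_add_right ih _).trans (ENNReal.add_rpow_le_rpow_add _ _ hq)

theorem Orthonormal.sum_enorm_inner_rpow_le {𝕜 E ι : Type*} [RCLike 𝕜] [NormedAddCommGroup E]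
    [InnerProductSpace 𝕜 E] {v : ι → E} (hv : Orthonormal 𝕜 v) (x : E) (s : Finset ι)
    {p : ℝ} (hp : 2 ≤ p) : ∑ i ∈ s, ‖⟪v i, x⟫_𝕜‖ₑ ^ p ≤ ‖x‖ₑ ^ p := by
  have hsq (z : ℝ≥0∞) : z ^ p = (z ^ 2) ^ (p / 2) := by
    rw [← ENNReal.rpow_two, ← ENNReal.rpow_mul]
    ring_nf
  have bessel : ∑ i ∈ s, ‖⟪v i, x⟫_𝕜‖ₑ ^ 2 ≤ ‖x‖ₑ ^ 2 := by
    simp only [← ofReal_norm, ← ENNReal.ofReal_pow (norm_nonneg _)]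
    rw [← ENNReal.ofReal_sum_of_nonneg fun _ _ => by positivity]
    exact ENNReal.ofReal_le_ofReal (hv.sum_inner_products_le x)
  calc ∑ i ∈ s, ‖⟪v i, x⟫_𝕜‖ₑ ^ p = ∑ i ∈ s, (‖⟪v i, x⟫_𝕜‖ₑ ^ 2) ^ (p / 2) := by
        simp only [← hsq]
    _ ≤ (∑ i ∈ s, ‖⟪v i, x⟫_𝕜‖ₑ ^ 2) ^ (p / 2) :=
        ENNReal.sum_rpow_le_rpow_sum _ _ (by linarith)
    _ ≤ (‖x‖ₑ ^ 2) ^ (p / 2) := ENNReal.rpow_le_rpow bessel (by linarith)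
    _ = ‖x‖ₑ ^ p := (hsq _).symm

theorem MeasureTheory.eLpNorm_ofReal_rpow_eq_lintegral {α E : Type*} [MeasurableSpace α]
    [NormedAddCommGroup E] {μ : Measure α} {f : α → E} {p : ℝ} (hp : 0 < p) :
    eLpNorm f (ENNReal.ofReal p) μ ^ p = ∫⁻ x, ‖f x‖ₑ ^ p ∂μ := by
  have h := eLpNorm_nnreal_pow_eq_lintegral (f := f) (μ := μ) (Real.toNNReal_pos.2 hp).ne'
  rwa [Real.coe_toNNReal _ hp.le] at h

theorem MeasureTheory.MemLp.inner_toLp_eq_integral {α 𝕜 : Type*} [MeasurableSpace α] [RCLike 𝕜]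
    {μ : Measure α} {f g : α → 𝕜} (hf : MemLp f 2 μ) (hg : MemLp g 2 μ) :
    ⟪hf.toLp f, hg.toLp g⟫_𝕜 = ∫ a, conj (f a) * g a ∂μ := by
  rw [L2.inner_def]
  refine integral_congr_ae ?_
  filter_upwards [hf.coeFn_toLp, hg.coeFn_toLp] with a hfa hga
  rw [RCLike.inner_apply', hfa, hga]

section Characters

variable {K : Type*} [Group K] [MeasurableSpace K] [MeasurableMul K] {ν : Measure K}
  [ν.IsMulLeftInvariant]

theorem integral_eq_zero_of_map_mul_of_ne_one {𝕜 : Type*} [RCLike 𝕜] {ψ : K → 𝕜}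
    (hψ : ∀ a b, ψ (a * b) = ψ a * ψ b) {k₀ : K} (hk₀ : ψ k₀ ≠ 1) : ∫ k, ψ k ∂ν = 0 := by
  have htranslate : ψ k₀ * ∫ k, ψ k ∂ν = ∫ k, ψ k ∂ν := by
    rw [← integral_const_mul]
    simp_rw [← hψ]
    exact integral_mul_left_eq_self ψ k₀
  have : (ψ k₀ - 1) * ∫ k, ψ k ∂ν = 0 := by rw [sub_mul, htranslate, one_mul, sub_self]
  exact (mul_eq_zero.1 this).resolve_left (sub_ne_zero.2 hk₀)

variable [IsProbabilityMeasure ν] {ι : Type*} {χ : ι → K → ℂ}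

theorem orthonormal_toLp_of_map_mul (hinj : Function.Injective χ)
    (hmul : ∀ i a b, χ i (a * b) = χ i a * χ i b) (hnorm : ∀ i k, ‖χ i k‖ = 1)
    (hmem : ∀ i, MemLp (χ i) 2 ν) : Orthonormal ℂ fun i => (hmem i).toLp (χ i) := by
  classical
  have hconj (i : ι) (k : K) : conj (χ i k) * χ i k = 1 := by
    rw [Complex.conj_mul', hnorm]; norm_num
  rw [orthonormal_iff_ite]
  intro i j
  rw [MemLp.inner_toLp_eq_integral]
  split_ifs with hij
  · simp [hij, hconj]
  · obtain ⟨k₀, hk₀⟩ := Function.ne_iff.1 (hinj.ne hij)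
    refine integral_eq_zero_of_map_mul_of_ne_one (k₀ := k₀)
      (fun a b => by rw [hmul, hmul, map_mul]; ring) fun h => hk₀ ?_
    calc χ i k₀ = χ i k₀ * (conj (χ i k₀) * χ j k₀) := by rw [h, mul_one]
      _ = conj (χ i k₀) * χ i k₀ * χ j k₀ := by ring
      _ = χ j k₀ := by rw [hconj, one_mul]

theorem sum_enorm_integral_mul_conj_rpow_le (hinj : Function.Injective χ)
    (hmul : ∀ i a b, χ i (a * b) = χ i a * χ i b) (hnorm : ∀ i k, ‖χ i k‖ = 1)
    (hmeas : ∀ i, AEStronglyMeasurable (χ i) ν) {p : ℝ} (hp : 2 ≤ p) {g : K → ℂ}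
    (hg : AEStronglyMeasurable g ν) (s : Finset ι) :
    ∑ i ∈ s, ‖∫ k, g k * conj (χ i k) ∂ν‖ₑ ^ p ≤ eLpNorm g (ENNReal.ofReal p) ν ^ p := by
  have hp0 : 0 < p := by linarith
  by_cases htop : eLpNorm g (ENNReal.ofReal p) ν = ⊤
  · simp [htop, ENNReal.top_rpow_of_pos hp0]
  have hgp : MemLp g (ENNReal.ofReal p) ν := ⟨hg, lt_top_iff_ne_top.2 htop⟩
  have h2p : (2 : ℝ≥0∞) ≤ ENNReal.ofReal p := by
    simpa using ENNReal.ofReal_le_ofReal hp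
  have hg2 : MemLp g 2 ν := hgp.mono_exponent h2p
  have hmem i : MemLp (χ i) 2 ν :=
    MemLp.of_bound (hmeas i) 1 (Filter.Eventually.of_forall fun k => (hnorm i k).le)
  have hinner i : ⟪(hmem i).toLp (χ i), hg2.toLp g⟫_ℂ = ∫ k, g k * conj (χ i k) ∂ν := by
    simp_rw [MemLp.inner_toLp_eq_integral, mul_comm]
  calc ∑ i ∈ s, ‖∫ k, g k * conj (χ i k) ∂ν‖ₑ ^ p
      = ∑ i ∈ s, ‖⟪(hmem i).toLp (χ i), hg2.toLp g⟫_ℂ‖ₑ ^ p := by simp_rw [hinner]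
    _ ≤ ‖hg2.toLp g‖ₑ ^ p :=
        (orthonormal_toLp_of_map_mul hinj hmul hnorm hmem).sum_enorm_inner_rpow_le _ s hp
    _ = eLpNorm g 2 ν ^ p := by rw [Lp.enorm_toLp]
    _ ≤ eLpNorm g (ENNReal.ofReal p) ν ^ p :=
        ENNReal.rpow_le_rpow (eLpNorm_le_eLpNorm_of_exponent_le h2p hg) hp0.le

end Characters

section Action

variable {K X : Type*} [MeasurableSpace K] [MeasurableSpace X] [SMul K X] {ν : Measure K}
  [IsProbabilityMeasure ν] {μ : Measure X} [SFinite μ]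
  (hmeas : Measurable fun q : K × X => q.1 • q.2)
  (hmp : ∀ k : K, MeasurePreserving (fun x : X => k • x) μ μ)
include hmeas hmp

theorem measurePreserving_smul_prod :
    MeasurePreserving (fun q : K × X => q.1 • q.2) (ν.prod μ) μ := by
  refine ⟨hmeas, Measure.ext fun s hs => ?_⟩
  rw [Measure.map_apply hmeas hs, Measure.prod_apply (hmeas hs)]
  have hfiber (k : K) : μ (Prod.mk k ⁻¹' ((fun q : K × X => q.1 • q.2) ⁻¹' s)) = μ s :=
    (hmp k).measure_preimage hs.nullMeasurableSet
  simp [hfiber]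

theorem lintegral_lintegral_smul {f : X → ℝ≥0∞} (hf : AEMeasurable f μ) :
    ∫⁻ x, ∫⁻ k, f (k • x) ∂ν ∂μ = ∫⁻ x, f x ∂μ := by
  have hφ := measurePreserving_smul_prod (ν := ν) hmeas hmp
  have hfφ : AEMeasurable (fun q : K × X => f (q.1 • q.2)) (ν.prod μ) :=
    hf.comp_quasiMeasurePreserving hφ.quasiMeasurePreserving
  rw [← lintegral_prod_symm _ hfφ, ← lintegral_map' (by rwa [hφ.map_eq]) hmeas.aemeasurable,
    hφ.map_eq]

end Action

theorem stmt_17_general {K : Type} [TopologicalSpace K] [CommGroup K] [IsTopologicalGroup K]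
    [MeasurableSpace K] [BorelSpace K]
    (ν : Measure K) [ν.IsHaarMeasure] [IsProbabilityMeasure ν]
    {X : Type} [MeasurableSpace X] (μ : Measure X) [IsProbabilityMeasure μ]
    [MulAction K X]
    (hmeas : Measurable fun q : K × X => q.1 • q.2)
    (hmp : ∀ k : K, MeasurePreserving (fun x : X => k • x) μ μ)
    (p : ℝ) (hp : 2 ≤ p)
    (F : X → ℂ) (hF : MemLp F (ENNReal.ofReal p) μ) :
    ∑' χ : {χ : K → ℂ // Continuous χ ∧ (∀ a b, χ (a * b) = χ a * χ b) ∧ ∀ k, ‖χ k‖ = 1},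
        eLpNorm (fun x => ∫ k, F (k • x) * (starRingEnd ℂ) (χ.1 k) ∂ν)
          (ENNReal.ofReal p) μ ^ p
      ≤ eLpNorm F (ENNReal.ofReal p) μ ^ p := by
  have hp0 : 0 < p := by linarith
  have hFsmul : AEStronglyMeasurable (fun z : X × K => F (z.2 • z.1)) (μ.prod ν) :=
    (hF.1.comp_measurePreserving (measurePreserving_smul_prod hmeas hmp)).prod_swap
  -- Finite partial sums: the characters are not known to be countable, so `lintegral_tsum` is out.
  rw [ENNReal.tsum_eq_iSup_sum]
  refine iSup_le fun s => ?_
  calc ∑ χ ∈ s, eLpNorm (fun x => ∫ k, F (k • x) * conj (χ.1 k) ∂ν) (ENNReal.ofReal p) μ ^ p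
      = ∫⁻ x, ∑ χ ∈ s, ‖∫ k, F (k • x) * conj (χ.1 k) ∂ν‖ₑ ^ p ∂μ := by
        simp_rw [eLpNorm_ofReal_rpow_eq_lintegral hp0]
        exact (lintegral_finsetSum' s fun χ _ => (hFsmul.mul
          (Complex.continuous_conj.comp χ.2.1).aestronglyMeasurable.comp_snd
          ).integral_prod_right'.enorm.pow_const p).symm
    _ ≤ ∫⁻ x, eLpNorm (fun k => F (k • x)) (ENNReal.ofReal p) ν ^ p ∂μ := by
        refine lintegral_mono_ae ?_
        filter_upwards [hFsmul.prodMk_left] with x hx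
        exact sum_enorm_integral_mul_conj_rpow_le Subtype.val_injective (fun χ => χ.2.2.1)
          (fun χ => χ.2.2.2) (fun χ => χ.2.1.aestronglyMeasurable) hp hx s
    _ = eLpNorm F (ENNReal.ofReal p) μ ^ p := by
        simp_rw [eLpNorm_ofReal_rpow_eq_lintegral hp0]
        exact lintegral_lintegral_smul hmeas hmp (hF.1.enorm.pow_const p)

/-- **Bessel-type inequality for vertical Fourier series** (Lemma `lem:bessel`):
for a measure-preserving action of a compact second countable abelian group `K` on a
probability space and `p ∈ [2,∞)`, the `p`-th powers of the `L^p` norms of the vertical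
Fourier components `F_χ(x) = ∫_K F(k•x) conj(χ k) dk` sum to at most `‖F‖_p^p`. -/
theorem stmt_17 {K : Type} [TopologicalSpace K] [CompactSpace K] [T2Space K]
    [SecondCountableTopology K] [CommGroup K] [IsTopologicalGroup K]
    [MeasurableSpace K] [BorelSpace K]
    (ν : Measure K) [ν.IsHaarMeasure] [IsProbabilityMeasure ν]
    {X : Type} [MeasurableSpace X] (μ : Measure X) [IsProbabilityMeasure μ]
    [MulAction K X]
    (hmeas : Measurable fun q : K × X => q.1 • q.2)
    (hmp : ∀ k : K, MeasurePreserving (fun x : X => k • x) μ μ)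
    (p : ℝ) (hp : 2 ≤ p)
    (F : X → ℂ) (hF : MemLp F (ENNReal.ofReal p) μ) :
    ∑' χ : {χ : K → ℂ // Continuous χ ∧ (∀ a b, χ (a * b) = χ a * χ b) ∧ ∀ k, ‖χ k‖ = 1},
        eLpNorm (fun x => ∫ k, F (k • x) * (starRingEnd ℂ) (χ.1 k) ∂ν)
          (ENNReal.ofReal p) μ ^ p
      ≤ eLpNorm F (ENNReal.ofReal p) μ ^ p :=
  stmt_17_general ν μ hmeas hmp p hp F hF
end

section
/- Let G be a nilpotent group with a filtration Gb = (G_i) of finite length d, and let Γ ≤ G be a subgroup of finite index. Then for every Gb-polynomial sequence g: ℤ→G the sequence of cosets n ↦ g(n)Γ is periodic: there exists an integer s ≥ 1 such that g(n)⁻¹·g(n+s) ∈ Γ for all n∈ℤ. -/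
/-!
Modulo the normal core of `Γ` a polynomial sequence becomes a polynomial sequence in a finite
group, so it suffices to show that polynomial sequences in a finite group are periodic. This goes
by induction on the length: if the unit-step derivative `Δ n = g(n)⁻¹ g(n+1)` is `s`-periodic,
then so is `e n = g(n)⁻¹ g(n+s)`, whence `g(n + m s) = g(n) e(n)^m`, and taking
`m` to be the order of the group kills the power.
-/

/-- `IsPolySeq k Gs g` says that `g : ℤ → G` is a polynomial sequence with respect to the
prefiltration `Gs` (of length `k - 1`) and the translation maps `n ↦ n + b`.  At fuel `0`
(trivial prefiltration) the only polynomial sequence is the constant identity; at fuel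
`k+1`, `g` takes values in `Gs 0` and every discrete derivative
`D_b g (n) = g(n)⁻¹ g(n+b)` is polynomial with respect to the shifted prefiltration. -/
def IsPolySeq {G : Type*} [Group G] : ℕ → (ℕ → Subgroup G) → (ℤ → G) → Prop
  | 0, _, g => ∀ n, g n = 1
  | k + 1, Gs, g => (∀ n, g n ∈ Gs 0) ∧
      ∀ b : ℤ, ∃ D : ℤ → G, IsPolySeq k (fun i => Gs (i + 1)) D ∧
        ∀ n : ℤ, D n = (g n)⁻¹ * g (n + b)

open Function

theorem IsPolySeq.map {G H : Type*} [Group G] [Group H] (φ : G →* H) :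
    ∀ {k : ℕ} {Gs : ℕ → Subgroup G} {g : ℤ → G}, IsPolySeq k Gs g →
      IsPolySeq k (fun i => (Gs i).map φ) (fun n => φ (g n))
  | 0, _, _, hg => fun n => by simp [hg n]
  | _ + 1, _, _, ⟨hmem, hD⟩ => by
    refine ⟨fun n => Subgroup.mem_map_of_mem φ (hmem n), fun b => ?_⟩
    obtain ⟨D, hDpoly, hDeq⟩ := hD b
    exact ⟨fun n => φ (D n), hDpoly.map φ, fun n => by simp [hDeq n]⟩

section PeriodicDifferences

variable {H : Type*} [Group H]

theorem periodic_inv_mul_add_of_periodic_inv_mul_add_one {g : ℤ → H} {c : ℤ}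
    (hΔ : Periodic (fun n => (g n)⁻¹ * g (n + 1)) c) (t : ℕ) :
    Periodic (fun n => (g n)⁻¹ * g (n + t)) c := by
  induction t with
  | zero => intro n; simp
  | succ t ih =>
    have hstep : ∀ n, (g n)⁻¹ * g (n + (t + 1 : ℕ)) =
        ((g n)⁻¹ * g (n + t)) * ((g (n + t))⁻¹ * g (n + t + 1)) := by
      intro n; push_cast; rw [add_assoc]; group
    intro n
    have hΔ' : (g (n + t + c))⁻¹ * g (n + t + c + 1) = (g (n + t))⁻¹ * g (n + t + 1) :=
      hΔ (n + t)
    have ih' : (g (n + c))⁻¹ * g (n + c + t) = (g n)⁻¹ * g (n + t) := ih n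
    beta_reduce
    rw [hstep, hstep, ih', add_right_comm n c, hΔ']

theorem add_nat_mul_eq_mul_pow {g : ℤ → H} {c : ℤ}
    (he : Periodic (fun n => (g n)⁻¹ * g (n + c)) c) (m : ℕ) (n : ℤ) :
    g (n + m * c) = g n * ((g n)⁻¹ * g (n + c)) ^ m := by
  induction m with
  | zero => simp
  | succ m ih =>
    have hper := he.nat_mul m n
    calc g (n + (m + 1 : ℕ) * c)
        = g (n + m * c) * ((g (n + m * c))⁻¹ * g (n + m * c + c)) := by
          push_cast; rw [add_one_mul, ← add_assoc]; group
      _ = g n * ((g n)⁻¹ * g (n + c)) ^ (m + 1) := by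
          rw [hper, ih, pow_succ, mul_assoc]

theorem exists_periodic_of_periodic_inv_mul_add_one [Finite H] {g : ℤ → H} {s : ℕ}
    (hs : 0 < s) (hΔ : Periodic (fun n => (g n)⁻¹ * g (n + 1)) s) :
    ∃ p : ℕ, 0 < p ∧ Periodic g p := by
  have he := periodic_inv_mul_add_of_periodic_inv_mul_add_one hΔ s
  refine ⟨Nat.card H * s, Nat.mul_pos Nat.card_pos hs, fun n => ?_⟩
  rw [Nat.cast_mul, add_nat_mul_eq_mul_pow he, pow_card_eq_one', mul_one]

end PeriodicDifferences

theorem IsPolySeq.exists_periodic {H : Type*} [Group H] [Finite H] :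
    ∀ {k : ℕ} {Gs : ℕ → Subgroup H} {g : ℤ → H}, IsPolySeq k Gs g →
      ∃ s : ℕ, 0 < s ∧ Periodic g s
  | 0, _, g, hg => ⟨1, one_pos, fun n => by rw [hg, hg]⟩
  | _ + 1, _, g, ⟨_, hD⟩ => by
    obtain ⟨D, hDpoly, hDeq⟩ := hD 1
    obtain ⟨s, hs, hDper⟩ := hDpoly.exists_periodic
    rw [show D = fun n => (g n)⁻¹ * g (n + 1) from funext hDeq] at hDper
    exact exists_periodic_of_periodic_inv_mul_add_one hs hDper

theorem stmt_18_general {G : Type*} [Group G] (Gs : ℕ → Subgroup G) (d : ℕ)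
    (Γ : Subgroup G) (hΓ : Γ.FiniteIndex)
    (g : ℤ → G) (hg : IsPolySeq (d + 1) Gs g) :
    ∃ s : ℤ, 1 ≤ s ∧ ∀ n : ℤ, (g n)⁻¹ * g (n + s) ∈ Γ := by
  obtain ⟨s, hs, hper⟩ := (hg.map (QuotientGroup.mk' Γ.normalCore)).exists_periodic
  refine ⟨s, by omega, fun n => Γ.normalCore_le ?_⟩
  exact QuotientGroup.eq.mp (hper n).symm

/-- **Periodicity of polynomial sequences modulo a finite index subgroup**
(Lemma `lem:periodic`). -/
theorem stmt_18 {G : Type*} [Group G] (Gs : ℕ → Subgroup G) (d : ℕ)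
    (hanti : ∀ i j : ℕ, i ≤ j → Gs j ≤ Gs i)
    (hcomm : ∀ i j : ℕ, ∀ a ∈ Gs i, ∀ b ∈ Gs j, a⁻¹ * b⁻¹ * a * b ∈ Gs (i + j))
    (hfilt0 : Gs 0 = ⊤) (hfilt1 : Gs 1 = ⊤) (hlen : Gs (d + 1) = ⊥)
    (Γ : Subgroup G) (hΓ : Γ.FiniteIndex)
    (g : ℤ → G) (hg : IsPolySeq (d + 1) Gs g) :
    ∃ s : ℤ, 1 ≤ s ∧ ∀ n : ℤ, (g n)⁻¹ * g (n + s) ∈ Γ :=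
  stmt_18_general Gs d Γ hΓ g hg
end
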